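/- arXiv:2605.10774 — 8 statements merged into one kernel-verified Lean document; each statement's English description precedes it below -/
import Mathlib

section
/- A function f:[0,1]→[0,1] is a trade-off function (i.e., equals T(P,Q) for some pair of probability measures P,Q) only if it is convex, continuous, non-increasing, and satisfies f(α) ≤ 1−α for all α∈[0,1]. -/
/-!
Monotonicity, the bound `1 - α` (constant test `φ ≡ α`) and convexity (mixtures of tests are
tests) come straight from the definition, and convexity gives continuity on `(0, ∞)`.
Right-continuity at `0` uses the Lebesgue decomposition `Q = Qₛ + g • P` with `Qₛ ⟂ P`:
rejecting outside a `P`-null set carrying `Qₛ` shows `T(0) ≤ (g • P)(X)`, while a test of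
`P`-level `α` has `E_{g • P}[φ] ≤ n α + ∫_{g > n} g dP` for every `n`, so
`T(α) ≥ (g • P)(X) - n α - ∫_{g > n} g dP`, and the last integral tends to `0` as `n → ∞`.
-/

open MeasureTheory Set

/-- The trade-off function `T(P,Q)(α) = inf { E_Q[1-φ] : φ measurable, 0 ≤ φ ≤ 1, E_P[φ] ≤ α }`. -/
noncomputable def tradeoff {X : Type*} [MeasurableSpace X] (P Q : Measure X) (α : ℝ) : ℝ :=
  sInf {b : ℝ | ∃ φ : X → ℝ, Measurable φ ∧ (∀ x, φ x ∈ Icc (0:ℝ) 1) ∧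
    (∫ x, φ x ∂P) ≤ α ∧ b = ∫ x, (1 - φ x) ∂Q}

open Filter Topology
open scoped ENNReal

section Truncation

variable {X : Type*} [MeasurableSpace X] {μ : Measure X} {g : X → ℝ≥0∞}

lemma tendsto_setLIntegral_nat_lt_atTop_zero (hg : Measurable g) (hint : ∫⁻ x, g x ∂μ ≠ ∞) :
    Tendsto (fun n : ℕ => ∫⁻ x in {x | (n : ℝ≥0∞) < g x}, g x ∂μ) atTop (𝓝 0) := by
  have hs (n : ℕ) : MeasurableSet {x | (n : ℝ≥0∞) < g x} := measurableSet_lt measurable_const hg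
  simp_rw [← lintegral_indicator (hs _)]
  have h := tendsto_lintegral_of_dominated_convergence (f := 0) g (fun n => hg.indicator (hs n))
    (fun n => .of_forall fun x => indicator_le_self _ _ x) hint ?_
  · simpa using h
  filter_upwards [ae_lt_top hg hint] with x hx
  obtain ⟨n₀, hn₀⟩ := ENNReal.exists_nat_gt hx.ne
  refine tendsto_atTop_of_eventually_const (i₀ := n₀) fun n hn => indicator_of_notMem ?_ _
  exact not_lt.2 (hn₀.le.trans (by exact_mod_cast hn))

lemma lintegral_mul_le_mul_lintegral_add_setLIntegral {ψ : X → ℝ≥0∞} (hg : Measurable g)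
    (hψ : Measurable ψ) (hψ1 : ∀ x, ψ x ≤ 1) (c : ℝ≥0∞) :
    ∫⁻ x, g x * ψ x ∂μ ≤ c * ∫⁻ x, ψ x ∂μ + ∫⁻ x in {x | c < g x}, g x ∂μ := by
  have hpt (x : X) : g x * ψ x ≤ c * ψ x + {x | c < g x}.indicator g x := by
    by_cases hx : x ∈ {x | c < g x}
    · rw [indicator_of_mem hx]
      exact le_add_left (mul_le_of_le_one_right' (hψ1 x))
    · exact le_add_right (mul_le_mul_left (not_lt.1 hx) _)
  calc ∫⁻ x, g x * ψ x ∂μ ≤ ∫⁻ x, (c * ψ x + {x | c < g x}.indicator g x) ∂μ := lintegral_mono hpt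
    _ = c * ∫⁻ x, ψ x ∂μ + ∫⁻ x in {x | c < g x}, g x ∂μ := by
      rw [lintegral_add_left (hψ.const_mul c), lintegral_const_mul c hψ,
        lintegral_indicator (measurableSet_lt measurable_const hg)]

end Truncation

section Tradeoff

variable {X : Type*} [MeasurableSpace X] {P Q : Measure X} {φ : X → ℝ} {α : ℝ}

lemma tradeoff_le_integral (hφ : Measurable φ) (h01 : ∀ x, φ x ∈ Icc 0 1)
    (hP : ∫ x, φ x ∂P ≤ α) : tradeoff P Q α ≤ ∫ x, (1 - φ x) ∂Q := by
  refine csInf_le ⟨0, ?_⟩ ⟨φ, hφ, h01, hP, rfl⟩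
  rintro _ ⟨ψ, -, hψ, -, rfl⟩
  exact integral_nonneg fun x => sub_nonneg.2 (hψ x).2

lemma le_tradeoff (hα : 0 ≤ α) {b : ℝ}
    (h : ∀ φ : X → ℝ, Measurable φ → (∀ x, φ x ∈ Icc 0 1) → ∫ x, φ x ∂P ≤ α →
      b ≤ ∫ x, (1 - φ x) ∂Q) :
    b ≤ tradeoff P Q α := by
  refine le_csInf ⟨_, 0, measurable_const, fun _ => ⟨le_rfl, zero_le_one⟩, by simpa using hα, rfl⟩ ?_
  rintro _ ⟨φ, hφ, h01, hP, rfl⟩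
  exact h φ hφ h01 hP

lemma exists_integral_lt_of_tradeoff_lt (hα : 0 ≤ α) {b : ℝ} (hb : tradeoff P Q α < b) :
    ∃ φ : X → ℝ, Measurable φ ∧ (∀ x, φ x ∈ Icc 0 1) ∧ ∫ x, φ x ∂P ≤ α ∧
      ∫ x, (1 - φ x) ∂Q < b := by
  by_contra! h
  exact hb.not_ge (le_tradeoff hα h)

lemma tradeoff_le_one_sub [IsProbabilityMeasure P] [IsProbabilityMeasure Q] (hα : α ∈ Icc 0 1) :
    tradeoff P Q α ≤ 1 - α := by
  simpa using tradeoff_le_integral (P := P) (Q := Q) (φ := fun _ => α) measurable_const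
    (fun _ => hα) (by simp)

lemma antitoneOn_tradeoff : AntitoneOn (tradeoff P Q) (Ici 0) := fun _ hα _ _ hαβ =>
  le_tradeoff hα fun _ hφ h01 hP => tradeoff_le_integral hφ h01 (hP.trans hαβ)

lemma tradeoff_mul_add_mul_le [IsFiniteMeasure P] [IsFiniteMeasure Q] {β a b : ℝ} {φ₁ φ₂ : X → ℝ}
    (hφ₁ : Measurable φ₁) (h01₁ : ∀ x, φ₁ x ∈ Icc 0 1) (hP₁ : ∫ x, φ₁ x ∂P ≤ α)
    (hφ₂ : Measurable φ₂) (h01₂ : ∀ x, φ₂ x ∈ Icc 0 1) (hP₂ : ∫ x, φ₂ x ∂P ≤ β)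
    (ha : 0 ≤ a) (hb : 0 ≤ b) (hab : a + b = 1) :
    tradeoff P Q (a * α + b * β) ≤ a * ∫ x, (1 - φ₁ x) ∂Q + b * ∫ x, (1 - φ₂ x) ∂Q := by
  have hi₁ (μ : Measure X) [IsFiniteMeasure μ] : Integrable φ₁ μ :=
    .of_mem_Icc 0 1 hφ₁.aemeasurable (.of_forall h01₁)
  have hi₂ (μ : Measure X) [IsFiniteMeasure μ] : Integrable φ₂ μ :=
    .of_mem_Icc 0 1 hφ₂.aemeasurable (.of_forall h01₂)
  have h01 (x : X) : a * φ₁ x + b * φ₂ x ∈ Icc 0 1 :=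
    convex_Icc (0 : ℝ) 1 (h01₁ x) (h01₂ x) ha hb hab
  have hP : ∫ x, a * φ₁ x + b * φ₂ x ∂P ≤ a * α + b * β := by
    rw [integral_add ((hi₁ P).const_mul a) ((hi₂ P).const_mul b), integral_const_mul,
      integral_const_mul]
    gcongr
  have hQ : ∫ x, (1 - (a * φ₁ x + b * φ₂ x)) ∂Q =
      a * ∫ x, (1 - φ₁ x) ∂Q + b * ∫ x, (1 - φ₂ x) ∂Q := by
    rw [← integral_const_mul, ← integral_const_mul, ← integral_add]
    · refine integral_congr_ae (.of_forall fun x => ?_)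
      simp only
      linear_combination -hab
    · exact ((integrable_const 1).sub (hi₁ Q)).const_mul a
    · exact ((integrable_const 1).sub (hi₂ Q)).const_mul b
  exact hQ ▸ tradeoff_le_integral (by fun_prop) h01 hP

lemma convexOn_tradeoff [IsFiniteMeasure P] [IsFiniteMeasure Q] :
    ConvexOn ℝ (Ici 0) (tradeoff P Q) := by
  refine ⟨convex_Ici 0, fun α hα β hβ a b ha hb hab => ?_⟩
  simp only [smul_eq_mul]
  refine le_of_forall_pos_le_add fun ε hε => ?_
  obtain ⟨φ₁, hφ₁, h01₁, hP₁, hQ₁⟩ :=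
    exists_integral_lt_of_tradeoff_lt (Q := Q) hα (lt_add_of_pos_right _ hε)
  obtain ⟨φ₂, hφ₂, h01₂, hP₂, hQ₂⟩ :=
    exists_integral_lt_of_tradeoff_lt (Q := Q) hβ (lt_add_of_pos_right _ hε)
  calc tradeoff P Q (a * α + b * β)
      ≤ a * ∫ x, (1 - φ₁ x) ∂Q + b * ∫ x, (1 - φ₂ x) ∂Q :=
        tradeoff_mul_add_mul_le hφ₁ h01₁ hP₁ hφ₂ h01₂ hP₂ ha hb hab
    _ ≤ a * (tradeoff P Q α + ε) + b * (tradeoff P Q β + ε) := by gcongr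
    _ = a * tradeoff P Q α + b * tradeoff P Q β + ε := by linear_combination ε * hab

end Tradeoff

section RightContinuity

variable {X : Type*} [MeasurableSpace X] {P Q : Measure X} [IsFiniteMeasure P] [IsFiniteMeasure Q]

lemma tradeoff_zero_le_real_withDensity_rnDeriv :
    tradeoff P Q 0 ≤ (P.withDensity (Q.rnDeriv P)).real univ := by
  have hsing := Measure.mutuallySingular_singularPart Q P
  set t := hsing.nullSet
  have ht : MeasurableSet t := hsing.measurableSet_nullSet
  have hQt : Q t = P.withDensity (Q.rnDeriv P) t := by
    conv_lhs => rw [← Measure.singularPart_add_rnDeriv Q P]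
    rw [Measure.add_apply, hsing.measure_nullSet, zero_add]
  have h01 (x : X) : tᶜ.indicator (1 : X → ℝ) x ∈ Icc 0 1 := by
    by_cases hx : x ∈ tᶜ <;> simp [hx]
  have hP : ∫ x, tᶜ.indicator (1 : X → ℝ) x ∂P ≤ 0 := by
    rw [integral_indicator_one ht.compl, measureReal_def, hsing.measure_compl_nullSet]
    simp
  calc tradeoff P Q 0 ≤ ∫ x, (1 - tᶜ.indicator 1 x) ∂Q :=
        tradeoff_le_integral (measurable_const.indicator ht.compl) h01 hP
    _ = Q.real t := by simp [indicator_compl, integral_indicator_one ht]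
    _ ≤ (P.withDensity (Q.rnDeriv P)).real univ := by
        rw [measureReal_def, hQt]
        exact measureReal_mono (subset_univ t)

lemma real_withDensity_rnDeriv_sub_le_tradeoff {α : ℝ} (hα : 0 ≤ α) (n : ℕ) :
    (P.withDensity (Q.rnDeriv P)).real univ -
        (n * α + (∫⁻ x in {x | (n : ℝ≥0∞) < Q.rnDeriv P x}, Q.rnDeriv P x ∂P).toReal) ≤
      tradeoff P Q α := by
  refine le_tradeoff hα fun φ hφ h01 hP => ?_
  set μ := P.withDensity (Q.rnDeriv P)
  set tail := ∫⁻ x in {x | (n : ℝ≥0∞) < Q.rnDeriv P x}, Q.rnDeriv P x ∂P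
  have hg := Measure.measurable_rnDeriv Q P
  have htail : tail ≠ ∞ :=
    ne_top_of_le_ne_top (Measure.lintegral_rnDeriv_lt_top Q P).ne (setLIntegral_le_lintegral _ _)
  have hφμ : ∫ x, φ x ∂μ ≤ n * α + tail.toReal := by
    rw [integral_eq_lintegral_of_nonneg_ae (.of_forall fun x => (h01 x).1) hφ.aestronglyMeasurable]
    refine ENNReal.toReal_le_of_le_ofReal (by positivity) ?_
    calc ∫⁻ x, ENNReal.ofReal (φ x) ∂μ = ∫⁻ x, Q.rnDeriv P x * ENNReal.ofReal (φ x) ∂P :=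
          lintegral_withDensity_eq_lintegral_mul P hg hφ.ennreal_ofReal
      _ ≤ n * ∫⁻ x, ENNReal.ofReal (φ x) ∂P + tail :=
          lintegral_mul_le_mul_lintegral_add_setLIntegral hg hφ.ennreal_ofReal
            (fun x => ENNReal.ofReal_le_one.2 (h01 x).2) n
      _ = n * ENNReal.ofReal (∫ x, φ x ∂P) + tail := by
          rw [ofReal_integral_eq_lintegral_ofReal
            (.of_mem_Icc 0 1 hφ.aemeasurable (.of_forall h01)) (.of_forall fun x => (h01 x).1)]
      _ ≤ n * ENNReal.ofReal α + tail := by gcongr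
      _ = ENNReal.ofReal (n * α + tail.toReal) := by
          rw [ENNReal.ofReal_add (by positivity) ENNReal.toReal_nonneg, ENNReal.ofReal_mul
            n.cast_nonneg, ENNReal.ofReal_natCast, ENNReal.ofReal_toReal htail]
  have hφ1 : Integrable (fun x => 1 - φ x) Q :=
    (integrable_const 1).sub (.of_mem_Icc 0 1 hφ.aemeasurable (.of_forall h01))
  calc μ.real univ - (n * α + tail.toReal) ≤ μ.real univ - ∫ x, φ x ∂μ := by linarith
    _ = ∫ x, (1 - φ x) ∂μ := by
        rw [integral_sub (integrable_const 1) (.of_mem_Icc 0 1 hφ.aemeasurable (.of_forall h01)),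
          integral_const, smul_eq_mul, mul_one]
    _ ≤ ∫ x, (1 - φ x) ∂Q := integral_mono_measure (Measure.withDensity_rnDeriv_le Q P)
        (.of_forall fun x => sub_nonneg.2 (h01 x).2) hφ1

lemma continuousWithinAt_tradeoff_zero : ContinuousWithinAt (tradeoff P Q) (Ici 0) 0 := by
  set m := (P.withDensity (Q.rnDeriv P)).real univ
  set tail : ℕ → ℝ := fun n => (∫⁻ x in {x | (n : ℝ≥0∞) < Q.rnDeriv P x}, Q.rnDeriv P x ∂P).toReal
  refine tendsto_order.2 ⟨fun a ha => ?_, fun b hb => ?_⟩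
  · have ham : 0 < m - a := sub_pos.2 (ha.trans_le tradeoff_zero_le_real_withDensity_rnDeriv)
    have htail : Tendsto tail atTop (𝓝 0) := by
      simpa [tail, Function.comp_def] using (ENNReal.tendsto_toReal ENNReal.zero_ne_top).comp
        (tendsto_setLIntegral_nat_lt_atTop_zero (Measure.measurable_rnDeriv Q P)
          (Measure.lintegral_rnDeriv_lt_top Q P).ne)
    obtain ⟨n, hn⟩ := (htail.eventually_lt_const ham).exists
    have hlower : Tendsto (fun α : ℝ => m - (n * α + tail n)) (𝓝[≥] 0) (𝓝 (m - tail n)) := by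
      refine (Continuous.tendsto' ?_ 0 _ (by simp)).mono_left nhdsWithin_le_nhds
      fun_prop
    filter_upwards [hlower.eventually_const_lt (show a < m - tail n by linarith), self_mem_nhdsWithin] with α h hα
    exact h.trans_le (real_withDensity_rnDeriv_sub_le_tradeoff hα n)
  · filter_upwards [self_mem_nhdsWithin] with α hα
    exact (antitoneOn_tradeoff self_mem_Ici hα hα).trans_lt hb

lemma continuousOn_tradeoff : ContinuousOn (tradeoff P Q) (Ici 0) := by
  intro α hα
  rcases (mem_Ici.1 hα).eq_or_lt with rfl | hpos
  · exact continuousWithinAt_tradeoff_zero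
  · have h := (convexOn_tradeoff (P := P) (Q := Q)).continuousOn_interior
    rw [interior_Ici] at h
    exact (h.continuousAt (Ioi_mem_nhds hpos)).continuousWithinAt

end RightContinuity

theorem stmt0_general {X : Type*} [MeasurableSpace X] (P Q : Measure X)
    [IsProbabilityMeasure P] [IsProbabilityMeasure Q]
    (f : ℝ → ℝ)
    (hf : ∀ α ∈ Icc (0:ℝ) 1, f α = tradeoff P Q α) :
    ConvexOn ℝ (Icc (0:ℝ) 1) f ∧ ContinuousOn f (Icc (0:ℝ) 1) ∧
      AntitoneOn f (Icc (0:ℝ) 1) ∧ ∀ α ∈ Icc (0:ℝ) 1, f α ≤ 1 - α := by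
  have hEq : EqOn (tradeoff P Q) f (Icc 0 1) := fun α hα => (hf α hα).symm
  have hsub : Icc (0 : ℝ) 1 ⊆ Ici 0 := Icc_subset_Ici_self
  exact ⟨(convexOn_tradeoff.subset hsub (convex_Icc 0 1)).congr hEq,
    (continuousOn_tradeoff.mono hsub).congr hf, (antitoneOn_tradeoff.mono hsub).congr hEq,
    fun α hα => (hf α hα).trans_le (tradeoff_le_one_sub hα)⟩

/-- a function `f : [0,1] → [0,1]` is a trade-off function only if it is
convex, continuous, non-increasing and satisfies `f α ≤ 1 - α` on `[0,1]`. -/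
theorem stmt0 {X : Type*} [MeasurableSpace X] (P Q : Measure X)
    [IsProbabilityMeasure P] [IsProbabilityMeasure Q]
    (f : ℝ → ℝ) (hrange : ∀ α ∈ Icc (0:ℝ) 1, f α ∈ Icc (0:ℝ) 1)
    (hf : ∀ α ∈ Icc (0:ℝ) 1, f α = tradeoff P Q α) :
    ConvexOn ℝ (Icc (0:ℝ) 1) f ∧ ContinuousOn f (Icc (0:ℝ) 1) ∧
      AntitoneOn f (Icc (0:ℝ) 1) ∧ ∀ α ∈ Icc (0:ℝ) 1, f α ≤ 1 - α :=
  stmt0_general P Q f hf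
end

section
/- For probability measures P,Q on a measurable space and ε∈[0,1], the total variation distance satisfies d_TV(P,Q) ≤ ε if and only if T(P,Q)(α) ≥ (1−ε−α)_+ for all α∈[0,1]. -/
open MeasureTheory Set

/-- Total variation distance `sup_A |P(A) - Q(A)|`. -/
noncomputable def dTV {X : Type*} [MeasurableSpace X] (P Q : Measure X) : ℝ :=
  sSup {r : ℝ | ∃ A : Set X, MeasurableSet A ∧ r = |(P A).toReal - (Q A).toReal|}

section TotalVariation

variable {X : Type*} [MeasurableSpace X] {P Q : Measure X} {ε : ℝ}

lemma abs_measureReal_sub_le_dTV [IsProbabilityMeasure P] [IsProbabilityMeasure Q] {A : Set X}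
    (hA : MeasurableSet A) : |P.real A - Q.real A| ≤ dTV P Q := by
  refine le_csSup ⟨1, ?_⟩ ⟨A, hA, rfl⟩
  rintro _ ⟨B, -, rfl⟩
  exact abs_sub_le_of_nonneg_of_le measureReal_nonneg measureReal_le_one
    measureReal_nonneg measureReal_le_one

lemma dTV_le_iff [IsProbabilityMeasure P] [IsProbabilityMeasure Q] :
    dTV P Q ≤ ε ↔ ∀ A, MeasurableSet A → Q.real A - P.real A ≤ ε := by
  refine ⟨fun h A hA => ?_, fun h => csSup_le ⟨0, ∅, .empty, by simp⟩ ?_⟩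
  · exact (le_abs_self _).trans
      ((abs_sub_comm _ _).trans_le ((abs_measureReal_sub_le_dTV hA).trans h))
  · rintro _ ⟨A, hA, rfl⟩
    change |P.real A - Q.real A| ≤ ε
    have hcompl := h Aᶜ hA.compl
    rw [probReal_compl_eq_one_sub hA, probReal_compl_eq_one_sub hA] at hcompl
    exact abs_le.2 ⟨by linarith [h A hA], by linarith⟩

end TotalVariation

section LayerCake

variable {X : Type*} [MeasurableSpace X] {φ : X → ℝ}

lemma integral_eq_integral_Ioc_measureReal_le (μ : Measure X) [IsFiniteMeasure μ]
    (hφ : Measurable φ) (hφ01 : ∀ x, φ x ∈ Icc (0 : ℝ) 1) :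
    ∫ x, φ x ∂μ = ∫ t in Ioc 0 1, μ.real {x | t ≤ φ x} :=
  (Integrable.of_mem_Icc 0 1 hφ.aemeasurable (ae_of_all _ hφ01)).integral_eq_integral_Ioc_meas_le
    (ae_of_all _ fun x => (hφ01 x).1) (ae_of_all _ fun x => (hφ01 x).2)

lemma integrableOn_Ioc_measureReal_le (μ : Measure X) [IsFiniteMeasure μ] (a b : ℝ) :
    IntegrableOn (fun t => μ.real {x | t ≤ φ x}) (Ioc a b) := by
  have hanti : Antitone fun t => μ.real {x | t ≤ φ x} :=
    fun s t hst => measureReal_mono fun x hx => hst.trans hx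
  exact (hanti.locallyIntegrable.integrableOn_isCompact isCompact_Icc).mono_set Ioc_subset_Icc_self

lemma integral_le_integral_add_of_forall_measureReal_sub_le {P Q : Measure X}
    [IsFiniteMeasure P] [IsFiniteMeasure Q] {ε : ℝ} (hφ : Measurable φ)
    (hφ01 : ∀ x, φ x ∈ Icc (0 : ℝ) 1) (hPQ : ∀ A, MeasurableSet A → Q.real A - P.real A ≤ ε) :
    ∫ x, φ x ∂Q ≤ ∫ x, φ x ∂P + ε := by
  have hP := integrableOn_Ioc_measureReal_le (φ := φ) P 0 1
  calc ∫ x, φ x ∂Q = ∫ t in Ioc 0 1, Q.real {x | t ≤ φ x} :=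
        integral_eq_integral_Ioc_measureReal_le Q hφ hφ01
    _ ≤ ∫ t in Ioc 0 1, (P.real {x | t ≤ φ x} + ε) :=
        setIntegral_mono_on (integrableOn_Ioc_measureReal_le Q 0 1)
          (hP.add (integrableOn_const (by simp))) measurableSet_Ioc fun t _ => by
            linarith [hPQ {x | t ≤ φ x} (hφ measurableSet_Ici)]
    _ = (∫ t in Ioc 0 1, P.real {x | t ≤ φ x}) + ε := by
        rw [integral_add hP (integrableOn_const (by simp))]
        simp
    _ = ∫ x, φ x ∂P + ε := by rw [integral_eq_integral_Ioc_measureReal_le P hφ hφ01]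

end LayerCake

section Tradeoff

variable {X : Type*} [MeasurableSpace X] {P Q : Measure X}

lemma tradeoff_nonneg {α : ℝ} : 0 ≤ tradeoff P Q α :=
  Real.sInf_nonneg <| by
    rintro _ ⟨φ, -, hφ01, -, rfl⟩
    exact integral_nonneg fun x => sub_nonneg.2 (hφ01 x).2

lemma tradeoff_measureReal_le [IsProbabilityMeasure Q] {A : Set X} (hA : MeasurableSet A) :
    tradeoff P Q (P.real A) ≤ 1 - Q.real A := by
  refine csInf_le ⟨0, ?_⟩ ⟨A.indicator 1, measurable_one.indicator hA, fun x => ?_,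
    (integral_indicator_one hA).le, ?_⟩
  · rintro _ ⟨φ, -, hφ01, -, rfl⟩
    exact integral_nonneg fun x => sub_nonneg.2 (hφ01 x).2
  · by_cases hx : x ∈ A <;> simp [hx]
  · rw [integral_sub (integrable_const 1) ((integrable_const 1).indicator hA),
      integral_indicator_one hA]
    simp

lemma one_sub_sub_le_tradeoff [IsProbabilityMeasure P] [IsProbabilityMeasure Q] {ε α : ℝ}
    (hα : α ∈ Icc (0 : ℝ) 1) (hPQ : ∀ A, MeasurableSet A → Q.real A - P.real A ≤ ε) :
    1 - ε - α ≤ tradeoff P Q α := by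
  refine le_csInf ⟨_, fun _ => α, measurable_const, fun _ => hα, by simp, rfl⟩ ?_
  rintro _ ⟨φ, hφ, hφ01, hφP, rfl⟩
  have hQ := integral_le_integral_add_of_forall_measureReal_sub_le hφ hφ01 hPQ
  rw [integral_sub (integrable_const 1) (Integrable.of_mem_Icc 0 1 hφ.aemeasurable
    (ae_of_all _ hφ01))]
  simp only [integral_const, probReal_univ, smul_eq_mul, one_mul]
  linarith

end Tradeoff

theorem stmt2_general {X : Type*} [MeasurableSpace X] (P Q : Measure X)
    [IsProbabilityMeasure P] [IsProbabilityMeasure Q]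
    (ε : ℝ) :
    dTV P Q ≤ ε ↔ ∀ α ∈ Icc (0:ℝ) 1, max (1 - ε - α) 0 ≤ tradeoff P Q α := by
  rw [dTV_le_iff]
  refine ⟨fun h α hα => max_le (one_sub_sub_le_tradeoff hα h) tradeoff_nonneg,
    fun h A hA => ?_⟩
  have hbound := (le_max_left _ _).trans ((h _ ⟨measureReal_nonneg, measureReal_le_one⟩).trans
    (tradeoff_measureReal_le hA))
  linarith

/-- `d_TV(P,Q) ≤ ε` iff `T(P,Q)(α) ≥ (1-ε-α)₊` for all `α ∈ [0,1]`. -/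
theorem stmt2 {X : Type*} [MeasurableSpace X] (P Q : Measure X)
    [IsProbabilityMeasure P] [IsProbabilityMeasure Q]
    (ε : ℝ) (hε : ε ∈ Icc (0:ℝ) 1) :
    dTV P Q ≤ ε ↔ ∀ α ∈ Icc (0:ℝ) 1, max (1 - ε - α) 0 ≤ tradeoff P Q α :=
  stmt2_general P Q ε
end

section
/- Let S be a class of measurable sets containing ∅ and the whole space X, and let P,Q be probability measures. Define F(α) = inf{ Q(Aᶜ) : A∈S, P(A) ≤ α } and G(α) = inf{ β : (α,β) ∈ conv{(P(A), Q(Aᶜ)) : A∈S} } for α∈[0,1]. Then G equals the greatest convex minorant of F on [0,1]. -/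
/-!
Write `W = {(P(A), Q(Aᶜ)) : A ∈ 𝒮}`, so that `G` is the lower boundary of `conv W`. A lower
boundary of a convex set is convex, and a convex `g ≤ F` has an epigraph containing `W`
(since `F(P(A)) ≤ Q(Aᶜ)`), hence containing `conv W`, so `g ≤ G`. Finally `G ≤ F`: the point
`(1, 0)` comes from `A = univ`, and for `A ∈ 𝒮` with `P(A) ≤ α ≤ 1` the segment from
`(P(A), Q(Aᶜ))` to `(1, 0)` meets the vertical line through `α` at height at most `Q(Aᶜ)`.
-/

open MeasureTheory Set

noncomputable def lowerEnvelope (C : Set (ℝ × ℝ)) (α : ℝ) : ℝ :=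
  sInf {b : ℝ | (α, b) ∈ C}

theorem convexOn_lowerEnvelope {C : Set (ℝ × ℝ)} (hC : Convex ℝ C) {s : Set ℝ}
    (hs : Convex ℝ s) (hne : ∀ α ∈ s, ∃ b, (α, b) ∈ C)
    (hbdd : ∀ α ∈ s, BddBelow {b : ℝ | (α, b) ∈ C}) :
    ConvexOn ℝ s (lowerEnvelope C) := by
  refine ⟨hs, fun x hx y hy a b ha hb hab => ?_⟩
  simp only [smul_eq_mul]
  refine le_of_forall_pos_le_add fun ε hε => ?_
  obtain ⟨c₁, hc₁, hc₁_lt⟩ := exists_lt_of_csInf_lt (hne x hx) (lt_add_of_pos_right _ hε)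
  obtain ⟨c₂, hc₂, hc₂_lt⟩ := exists_lt_of_csInf_lt (hne y hy) (lt_add_of_pos_right _ hε)
  have hmem : (a * x + b * y, a * c₁ + b * c₂) ∈ C := by
    simpa using hC hc₁ hc₂ ha hb hab
  calc lowerEnvelope C (a * x + b * y)
      ≤ a * c₁ + b * c₂ := csInf_le (hbdd _ (hs hx hy ha hb hab)) hmem
    _ ≤ a * (lowerEnvelope C x + ε) + b * (lowerEnvelope C y + ε) := by
      gcongr
      exacts [hc₁_lt.le, hc₂_lt.le]
    _ = a * lowerEnvelope C x + b * lowerEnvelope C y + ε := by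
      linear_combination ε * hab

theorem le_lowerEnvelope_convexHull {W : Set (ℝ × ℝ)} {s : Set ℝ} {g : ℝ → ℝ}
    (hg : ConvexOn ℝ s g) (hW : W ⊆ {p | p.1 ∈ s ∧ g p.1 ≤ p.2}) {α : ℝ}
    (hne : ∃ b, (α, b) ∈ convexHull ℝ W) :
    g α ≤ lowerEnvelope (convexHull ℝ W) α :=
  le_csInf hne fun _ hb => (convexHull_min hW hg.convex_epigraph hb).2

theorem exists_mem_convexHull_snd_le {W : Set (ℝ × ℝ)} (h10 : ((1 : ℝ), (0 : ℝ)) ∈ W)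
    {x y α : ℝ} (hxy : (x, y) ∈ W) (hy : 0 ≤ y) (hxα : x ≤ α) (hα1 : α ≤ 1) :
    ∃ c ≤ y, (α, c) ∈ convexHull ℝ W := by
  obtain ⟨a, b, ha, hb, hab, rfl⟩ := Icc_subset_segment (𝕜 := ℝ) ⟨hxα, hα1⟩
  refine ⟨a * y, by nlinarith, ?_⟩
  have hmem := convex_convexHull ℝ W (subset_convexHull ℝ W hxy)
    (subset_convexHull ℝ W h10) ha hb hab
  simpa using hmem

theorem stmt4_general {X : Type*} [MeasurableSpace X] (P Q : Measure X)
    [IsProbabilityMeasure P] [IsProbabilityMeasure Q]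
    (𝒮 : Set (Set X))
    (hempty : ∅ ∈ 𝒮) (huniv : univ ∈ 𝒮)
    (F G : ℝ → ℝ)
    (hF : ∀ α : ℝ, F α = sInf {b : ℝ | ∃ A ∈ 𝒮, (P A).toReal ≤ α ∧ b = (Q Aᶜ).toReal})
    (hG : ∀ α : ℝ, G α = sInf {b : ℝ |
      (α, b) ∈ convexHull ℝ {p : ℝ × ℝ | ∃ A ∈ 𝒮, p = ((P A).toReal, (Q Aᶜ).toReal)}}) :
    (ConvexOn ℝ (Icc (0:ℝ) 1) G ∧ ∀ α ∈ Icc (0:ℝ) 1, G α ≤ F α) ∧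
    (∀ g : ℝ → ℝ, ConvexOn ℝ (Icc (0:ℝ) 1) g → (∀ α ∈ Icc (0:ℝ) 1, g α ≤ F α) →
      ∀ α ∈ Icc (0:ℝ) 1, g α ≤ G α) := by
  set W : Set (ℝ × ℝ) := {p | ∃ A ∈ 𝒮, p = ((P A).toReal, (Q Aᶜ).toReal)}
  have hG' : G = lowerEnvelope (convexHull ℝ W) := funext hG
  have hP01 (A : Set X) : (P A).toReal ∈ Icc (0:ℝ) 1 := ⟨measureReal_nonneg, measureReal_le_one⟩
  have h10 : ((1 : ℝ), (0 : ℝ)) ∈ W := ⟨univ, huniv, by simp⟩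
  have hhull : convexHull ℝ W ⊆ univ ×ˢ Ici 0 :=
    convexHull_min (by rintro _ ⟨A, -, rfl⟩; exact ⟨trivial, measureReal_nonneg⟩)
      (convex_univ.prod (convex_Ici 0))
  have hbdd (α : ℝ) : BddBelow {b : ℝ | (α, b) ∈ convexHull ℝ W} :=
    ⟨0, fun _ hb => (hhull hb).2⟩
  have hle (A : Set X) (hA : A ∈ 𝒮) {α : ℝ} (hAα : (P A).toReal ≤ α) (hα1 : α ≤ 1) :
      lowerEnvelope (convexHull ℝ W) α ≤ (Q Aᶜ).toReal := by
    obtain ⟨c, hcy, hc⟩ := exists_mem_convexHull_snd_le h10 ⟨A, hA, rfl⟩ measureReal_nonneg hAα hα1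
    exact (csInf_le (hbdd α) hc).trans hcy
  have hfiber (α : ℝ) (hα : α ∈ Icc (0:ℝ) 1) : ∃ b, (α, b) ∈ convexHull ℝ W :=
    (exists_mem_convexHull_snd_le h10 ⟨∅, hempty, rfl⟩ measureReal_nonneg
      (by simpa using hα.1) hα.2).imp fun _ h => h.2
  refine ⟨⟨hG' ▸ convexOn_lowerEnvelope (convex_convexHull ℝ W) (convex_Icc 0 1) hfiber
    fun α _ => hbdd α, fun α hα => ?_⟩, fun g hg hgF α hα => ?_⟩
  · rw [hF, hG']
    exact le_csInf ⟨_, ∅, hempty, by simpa using hα.1, rfl⟩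
      (by rintro _ ⟨A, hA, hAα, rfl⟩; exact hle A hA hAα hα.2)
  · refine hG' ▸ le_lowerEnvelope_convexHull hg ?_ (hfiber α hα)
    rintro _ ⟨A, hA, rfl⟩
    refine ⟨hP01 A, (hgF _ (hP01 A)).trans ?_⟩
    rw [hF]
    exact csInf_le ⟨0, by rintro _ ⟨B, -, -, rfl⟩; exact measureReal_nonneg⟩ ⟨A, hA, le_rfl, rfl⟩

/-- the convex-hull envelope `G` of the witness points
`{(P(A), Q(Aᶜ)) : A ∈ 𝒮}` equals the greatest convex minorant of
`F(α) = inf { Q(Aᶜ) : A ∈ 𝒮, P(A) ≤ α }` on `[0,1]`. -/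
theorem stmt4 {X : Type*} [MeasurableSpace X] (P Q : Measure X)
    [IsProbabilityMeasure P] [IsProbabilityMeasure Q]
    (𝒮 : Set (Set X)) (hmeas : ∀ A ∈ 𝒮, MeasurableSet A)
    (hempty : ∅ ∈ 𝒮) (huniv : univ ∈ 𝒮)
    (F G : ℝ → ℝ)
    (hF : ∀ α : ℝ, F α = sInf {b : ℝ | ∃ A ∈ 𝒮, (P A).toReal ≤ α ∧ b = (Q Aᶜ).toReal})
    (hG : ∀ α : ℝ, G α = sInf {b : ℝ |
      (α, b) ∈ convexHull ℝ {p : ℝ × ℝ | ∃ A ∈ 𝒮, p = ((P A).toReal, (Q Aᶜ).toReal)}}) :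
    (ConvexOn ℝ (Icc (0:ℝ) 1) G ∧ ∀ α ∈ Icc (0:ℝ) 1, G α ≤ F α) ∧
    (∀ g : ℝ → ℝ, ConvexOn ℝ (Icc (0:ℝ) 1) g → (∀ α ∈ Icc (0:ℝ) 1, g α ≤ F α) →
      ∀ α ∈ Icc (0:ℝ) 1, g α ≤ G α) :=
  stmt4_general P Q 𝒮 hempty huniv F G hF hG
end

section
/- Let S be a class of measurable sets containing ∅ and X, and suppose the pair (P,Q) is S-attainable. If f:[0,1]→[0,1] is convex, continuous, and non-increasing, and T(P,Q)(α₀) < f(α₀) for some α₀∈[0,1], then there exists S*∈S with Q((S*)ᶜ) < f(P(S*)). -/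
/-!
Take a test `φ` with `E_P φ ≤ α₀` and `E_Q (1 - φ) < f α₀`. For `α₀ > 0`, convexity and
monotonicity give a supporting line `f t ≥ f α₀ - λ (t - α₀)` with `λ ≥ 0`. The set
`S = {q > λ p}` minimises `Q Sᶜ + λ P S` among all tests (Neyman–Pearson), so
`Q Sᶜ < f α₀ - λ (P S - α₀) ≤ f (P S)`. For `α₀ = 0` the test vanishes `P`-a.e., hence on
`{p > 0}`, and `S = {p = 0}` has `P S = 0` and `Q Sᶜ ≤ E_Q (1 - φ) < f 0`.
-/

open MeasureTheory Set
open scoped ENNReal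

/-- `(P,Q)` is `𝒮`-attainable: with `μ = (P+Q)/2`, `p = dP/dμ`, `q = dQ/dμ`, for every
`λ ∈ [0,∞]` some `S ∈ 𝒮` coincides `μ`-a.e. with `{q > λ p}` (with `{p = 0}` for `λ = ∞`). -/
def SAttainable {X : Type*} [MeasurableSpace X] (𝒮 : Set (Set X)) (P Q : Measure X) : Prop :=
  ∀ lam : ℝ≥0∞, ∃ S ∈ 𝒮,
    ∀ᵐ x ∂((2 : ℝ≥0∞)⁻¹ • (P + Q)),
      (x ∈ S ↔
        ((lam = ⊤ ∧ P.rnDeriv ((2 : ℝ≥0∞)⁻¹ • (P + Q)) x = 0) ∨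
         (lam ≠ ⊤ ∧ lam * P.rnDeriv ((2 : ℝ≥0∞)⁻¹ • (P + Q)) x
            < Q.rnDeriv ((2 : ℝ≥0∞)⁻¹ • (P + Q)) x)))

lemma ConvexOn.exists_sub_mul_le_of_antitoneOn {s : Set ℝ} {f : ℝ → ℝ} {x : ℝ}
    (hf : ConvexOn ℝ s f) (hanti : AntitoneOn f s) (hx : x ∈ s) (hlow : ∃ a ∈ s, a < x) :
    ∃ c, 0 ≤ c ∧ ∀ t ∈ s, f x - c * (t - x) ≤ f t := by
  obtain ⟨a, ha, hax⟩ := hlow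
  have hslope : ∀ t, (t - x) * slope f x t = f t - f x := sub_smul_slope f x
  set B := slope f x '' (s ∩ Iio x)
  have hB : ∀ b ∈ B, b ≤ 0 := by
    rintro _ ⟨u, ⟨hu, hux : u < x⟩, rfl⟩
    rw [slope_comm, slope_def_field]
    exact div_nonpos_of_nonpos_of_nonneg (by linarith [hanti hu hx hux.le]) (by linarith)
  have hBne : B.Nonempty := ⟨_, a, ⟨ha, hax⟩, rfl⟩
  refine ⟨-sSup B, by linarith [csSup_le hBne hB], fun t ht => ?_⟩
  rcases lt_trichotomy t x with htx | rfl | hxt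
  · have : slope f x t ≤ sSup B := le_csSup ⟨0, hB⟩ ⟨t, ⟨ht, htx⟩, rfl⟩
    nlinarith [hslope t]
  · simp
  · have : sSup B ≤ slope f x t := csSup_le hBne <| by
      rintro _ ⟨u, ⟨hu, hux : u < x⟩, rfl⟩
      exact hf.slope_mono hx ⟨hu, hux.ne⟩ ⟨ht, hxt.ne'⟩ (hux.trans hxt).le
    nlinarith [hslope t]

section TestFunctions

variable {X : Type*} [MeasurableSpace X] {μ P Q : Measure X} {φ : X → ℝ}

lemma integrable_of_mem_Icc [IsFiniteMeasure μ] (hφ : Measurable φ)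
    (hφ01 : ∀ x, φ x ∈ Icc 0 1) : Integrable φ μ :=
  .of_bound hφ.aestronglyMeasurable 1 <| ae_of_all _ fun x => by
    rw [Real.norm_eq_abs, abs_of_nonneg (hφ01 x).1]; exact (hφ01 x).2

lemma exists_test_of_tradeoff_lt {α c : ℝ} (hα : 0 ≤ α) (h : tradeoff P Q α < c) :
    ∃ φ : X → ℝ, Measurable φ ∧ (∀ x, φ x ∈ Icc 0 1) ∧ ∫ x, φ x ∂P ≤ α ∧
      ∫ x, (1 - φ x) ∂Q < c := by
  rw [tradeoff, csInf_lt_iff] at h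
  · obtain ⟨_, ⟨φ, hφ, hφ01, hφP, rfl⟩, hlt⟩ := h
    exact ⟨φ, hφ, hφ01, hφP, hlt⟩
  · refine ⟨0, ?_⟩
    rintro _ ⟨φ, -, hφ01, -, rfl⟩
    exact integral_nonneg fun x => sub_nonneg.2 (hφ01 x).2
  · exact ⟨_, 0, measurable_const, fun _ => ⟨le_rfl, zero_le_one⟩, by simpa using hα, rfl⟩

/-- Neyman–Pearson: `∫ g dQ - c ∫ g dP = ∫ g (q - c p) dμ`. -/
lemma mul_integral_le_integral_of_ae_nonneg [SigmaFinite P] [SigmaFinite Q]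
    [P.HaveLebesgueDecomposition μ] [Q.HaveLebesgueDecomposition μ]
    (hPμ : P ≪ μ) (hQμ : Q ≪ μ) {g : X → ℝ} (hgP : Integrable g P) (hgQ : Integrable g Q)
    (c : ℝ) (h : ∀ᵐ x ∂μ, 0 ≤ g x * ((Q.rnDeriv μ x).toReal - c * (P.rnDeriv μ x).toReal)) :
    c * ∫ x, g x ∂P ≤ ∫ x, g x ∂Q := by
  rw [← integral_toReal_rnDeriv_mul hPμ, ← integral_toReal_rnDeriv_mul hQμ,
    ← integral_const_mul, ← sub_nonneg, ← integral_sub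
      ((integrable_toReal_rnDeriv_mul_iff hQμ).2 hgQ)
      (((integrable_toReal_rnDeriv_mul_iff hPμ).2 hgP).const_mul c)]
  exact integral_nonneg_of_ae <| h.mono fun x hx => by simp only [Pi.zero_apply]; linarith

lemma measureReal_compl_add_mul_le [IsFiniteMeasure P] [IsFiniteMeasure Q]
    [P.HaveLebesgueDecomposition μ] [Q.HaveLebesgueDecomposition μ]
    (hPμ : P ≪ μ) (hQμ : Q ≪ μ) {c : ℝ} (hc : 0 ≤ c) {S : Set X} (hS : MeasurableSet S)
    (hSae : ∀ᵐ x ∂μ, x ∈ S ↔ ENNReal.ofReal c * P.rnDeriv μ x < Q.rnDeriv μ x)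
    (hφ : Measurable φ) (hφ01 : ∀ x, φ x ∈ Icc 0 1) :
    Q.real Sᶜ + c * P.real S ≤ ∫ x, (1 - φ x) ∂Q + c * ∫ x, φ x ∂P := by
  have h1S : ∀ ν : Measure X, [IsFiniteMeasure ν] → Integrable (S.indicator (1 : X → ℝ)) ν :=
    fun ν _ => (integrable_const 1).indicator hS
  have hφI : ∀ ν : Measure X, [IsFiniteMeasure ν] → Integrable φ ν :=
    fun ν _ => integrable_of_mem_Icc hφ hφ01
  have hSφ : ∀ ν : Measure X, [IsFiniteMeasure ν] → Integrable (S.indicator 1 - φ) ν :=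
    fun ν _ => (h1S ν).sub (hφI ν)
  have key := mul_integral_le_integral_of_ae_nonneg hPμ hQμ (hSφ P) (hSφ Q) c <| by
    filter_upwards [hSae, Measure.rnDeriv_lt_top P μ, Measure.rnDeriv_lt_top Q μ]
      with x hx hp hq
    have hlt : ENNReal.ofReal c * P.rnDeriv μ x < Q.rnDeriv μ x ↔
        c * (P.rnDeriv μ x).toReal < (Q.rnDeriv μ x).toReal := by
      rw [← ENNReal.toReal_lt_toReal (ENNReal.mul_ne_top ENNReal.ofReal_ne_top hp.ne) hq.ne,
        ENNReal.toReal_mul, ENNReal.toReal_ofReal hc]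
    by_cases hxS : x ∈ S
    · simp only [Pi.sub_apply, indicator_of_mem hxS, Pi.one_apply]
      exact mul_nonneg (sub_nonneg.2 (hφ01 x).2) (sub_nonneg.2 (hlt.1 (hx.1 hxS)).le)
    · simp only [Pi.sub_apply, indicator_of_notMem hxS, zero_sub]
      exact mul_nonneg_of_nonpos_of_nonpos (neg_nonpos.2 (hφ01 x).1)
        (sub_nonpos.2 (not_lt.1 (mt hlt.2 (mt hx.2 hxS))))
  simp only [Pi.sub_apply] at key
  rw [integral_sub (h1S P) (hφI P), integral_sub (h1S Q) (hφI Q),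
    integral_indicator_one hS, integral_indicator_one hS] at key
  rw [integral_sub (integrable_const 1) (hφI Q), integral_const, smul_eq_mul, mul_one,
    ← measureReal_add_measureReal_compl hS]
  linarith

lemma measure_eq_zero_of_ae_mem_iff_rnDeriv_eq_zero [P.HaveLebesgueDecomposition μ]
    (hPμ : P ≪ μ) {S : Set X} (hSae : ∀ᵐ x ∂μ, x ∈ S ↔ P.rnDeriv μ x = 0) : P S = 0 :=
  measure_eq_zero_iff_ae_notMem.2 <| by
    filter_upwards [Measure.rnDeriv_pos hPμ, hPμ.ae_le hSae] with x hpos hx hxS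
    exact hpos.ne' (hx.1 hxS)

lemma measureReal_compl_le_integral_one_sub [IsFiniteMeasure P] [IsFiniteMeasure Q]
    [P.HaveLebesgueDecomposition μ]
    (hPμ : P ≪ μ) (hQμ : Q ≪ μ) {S : Set X} (hS : MeasurableSet S)
    (hSae : ∀ᵐ x ∂μ, x ∈ S ↔ P.rnDeriv μ x = 0)
    (hφ : Measurable φ) (hφ01 : ∀ x, φ x ∈ Icc 0 1) (hφP : ∫ x, φ x ∂P ≤ 0) :
    Q.real Sᶜ ≤ ∫ x, (1 - φ x) ∂Q := by
  have hφ0 : φ =ᵐ[P] 0 := (integral_eq_zero_iff_of_nonneg (fun x => (hφ01 x).1)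
    (integrable_of_mem_Icc hφ hφ01)).1 (hφP.antisymm (integral_nonneg fun x => (hφ01 x).1))
  have hφ0μ : ∀ᵐ x ∂μ, P.rnDeriv μ x ≠ 0 → φ x = 0 := by
    rw [← ae_withDensity_iff (Measure.measurable_rnDeriv P μ),
      Measure.withDensity_rnDeriv_eq P μ hPμ]
    exact hφ0
  rw [← integral_indicator_one hS.compl]
  refine integral_mono_ae ((integrable_const 1).indicator hS.compl)
    ((integrable_const 1).sub (integrable_of_mem_Icc hφ hφ01)) (hQμ.ae_le ?_)
  filter_upwards [hSae, hφ0μ] with x hx hφx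
  by_cases hxS : x ∈ S
  · simpa [hxS] using (hφ01 x).2
  · simp [hxS, hφx (mt hx.2 hxS)]

end TestFunctions

theorem stmt5_general {X : Type*} [MeasurableSpace X] (P Q : Measure X)
    [IsProbabilityMeasure P] [IsProbabilityMeasure Q]
    (𝒮 : Set (Set X)) (hmeas : ∀ A ∈ 𝒮, MeasurableSet A)
    (hatt : SAttainable 𝒮 P Q)
    (f : ℝ → ℝ) (hconv : ConvexOn ℝ (Icc (0:ℝ) 1) f)
    (hanti : AntitoneOn f (Icc (0:ℝ) 1))
    (α₀ : ℝ) (hα₀ : α₀ ∈ Icc (0:ℝ) 1) (hlt : tradeoff P Q α₀ < f α₀) :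
    ∃ S ∈ 𝒮, (Q Sᶜ).toReal < f ((P S).toReal) := by
  set μ : Measure X := (2 : ℝ≥0∞)⁻¹ • (P + Q)
  have : IsFiniteMeasure μ := (P + Q).smul_finite (by simp)
  have hPμ : P ≪ μ := (Measure.AbsolutelyContinuous.rfl.add_right Q).trans
    (Measure.absolutelyContinuous_smul (by simp))
  have hQμ : Q ≪ μ := (Measure.AbsolutelyContinuous.rfl.add_right' P).trans
    (Measure.absolutelyContinuous_smul (by simp))
  obtain ⟨φ, hφ, hφ01, hφP, hφQ⟩ := exists_test_of_tradeoff_lt hα₀.1 hlt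
  -- At `α₀ = 0` the supporting line of `f` may be vertical, so `λ = ∞` is used there.
  rcases hα₀.1.eq_or_lt with rfl | hα₀pos
  · obtain ⟨S, hS, hSae⟩ := hatt ⊤
    simp only [true_and, ne_eq, not_true_eq_false, false_and, or_false] at hSae
    refine ⟨S, hS, ?_⟩
    rw [measure_eq_zero_of_ae_mem_iff_rnDeriv_eq_zero hPμ hSae, ENNReal.toReal_zero]
    exact (measureReal_compl_le_integral_one_sub hPμ hQμ (hmeas S hS) hSae hφ hφ01
      hφP).trans_lt hφQ
  · obtain ⟨c, hc, hsupp⟩ := hconv.exists_sub_mul_le_of_antitoneOn hanti hα₀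
      ⟨0, left_mem_Icc.2 zero_le_one, hα₀pos⟩
    obtain ⟨S, hS, hSae⟩ := hatt (ENNReal.ofReal c)
    simp only [ENNReal.ofReal_ne_top, false_and, ne_eq, not_false_eq_true, true_and,
      false_or] at hSae
    refine ⟨S, hS, ?_⟩
    have hNP := measureReal_compl_add_mul_le hPμ hQμ hc (hmeas S hS) hSae hφ hφ01
    have hf := hsupp (P.real S) ⟨measureReal_nonneg, measureReal_le_one⟩
    change Q.real Sᶜ < f (P.real S)
    linarith [mul_le_mul_of_nonneg_left hφP hc]

/-- witness property: if `(P,Q)` is `𝒮`-attainable and `f` is convex,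
continuous and non-increasing on `[0,1]` with `T(P,Q)(α₀) < f(α₀)` for some `α₀`, then
some `S* ∈ 𝒮` satisfies `Q((S*)ᶜ) < f(P(S*))`. -/
theorem stmt5 {X : Type*} [MeasurableSpace X] (P Q : Measure X)
    [IsProbabilityMeasure P] [IsProbabilityMeasure Q]
    (𝒮 : Set (Set X)) (hmeas : ∀ A ∈ 𝒮, MeasurableSet A)
    (hempty : ∅ ∈ 𝒮) (huniv : univ ∈ 𝒮)
    (hatt : SAttainable 𝒮 P Q)
    (f : ℝ → ℝ) (hconv : ConvexOn ℝ (Icc (0:ℝ) 1) f)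
    (hcont : ContinuousOn f (Icc (0:ℝ) 1)) (hanti : AntitoneOn f (Icc (0:ℝ) 1))
    (hrange : ∀ t ∈ Icc (0:ℝ) 1, f t ∈ Icc (0:ℝ) 1)
    (α₀ : ℝ) (hα₀ : α₀ ∈ Icc (0:ℝ) 1) (hlt : tradeoff P Q α₀ < f α₀) :
    ∃ S ∈ 𝒮, (Q Sᶜ).toReal < f ((P S).toReal) :=
  stmt5_general P Q 𝒮 hmeas hatt f hconv hanti α₀ hα₀ hlt
end

section
/- If (P,Q) is S-attainable for a class S of measurable sets containing ∅ and X, then for all α∈[0,1], T(P,Q)(α) = inf{ β : (α,β) ∈ closed convex hull of {(P(S), Q(Sᶜ)) : S∈S} }. -/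
open MeasureTheory Set
open scoped ENNReal

open Filter Topology

/-!
Write `p, q` for the densities of `P, Q` with respect to `μ = (P + Q) / 2`. For every `c ≥ 0`
the Neyman–Pearson inequality says that no test `φ` beats the likelihood-ratio set `{c p < q}`
in the weighted risk `E_Q[1 - φ] + c E_P[φ]`. Hence every achievable point `(E_P φ, E_Q[1 - φ])`,
and every point of the closed convex hull of the points `(P S, Q Sᶜ)`, lies above all the lines
`b + c a = min risk`.

Conversely, for `α > 0` take the threshold `c₀ = inf {c ≥ 0 : P {c p < q} ≤ α}` and randomize
between `{c₀ p < q}` (attainable) and a limit of the attainable sets `{c p < q}`, `c ↑ c₀`: the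
resulting point `(α, b)` is both achieved by a test and in the closed hull, and lies on the line
of slope `c₀`, so it is the minimum of both sides. For `α = 0` the attainable set `{p = 0}`
plays this role, certified by the lines with `c → ∞`.
-/

namespace HypothesisTesting

variable {X : Type*} [MeasurableSpace X]

def IsTest (φ : X → ℝ) : Prop := Measurable φ ∧ ∀ x, φ x ∈ Icc (0 : ℝ) 1

def testRegion (P Q : Measure X) : Set (ℝ × ℝ) :=
  {z | ∃ φ, IsTest φ ∧ z = (∫ x, φ x ∂P, ∫ x, (1 - φ x) ∂Q)}

def riskPoint (P Q : Measure X) (S : Set X) : ℝ × ℝ := (P.real S, Q.real Sᶜ)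

namespace IsTest

variable {φ ψ : X → ℝ}

lemma integrable (hφ : IsTest φ) (ν : Measure X) [IsFiniteMeasure ν] : Integrable φ ν :=
  .of_bound hφ.1.aestronglyMeasurable 1 <| .of_forall fun x => by
    rw [Real.norm_of_nonneg (hφ.2 x).1]
    exact (hφ.2 x).2

lemma indicator_one {S : Set X} (hS : MeasurableSet S) : IsTest (S.indicator 1) :=
  ⟨measurable_one.indicator hS, fun x => by by_cases hx : x ∈ S <;> simp [hx]⟩

lemma combo (hφ : IsTest φ) (hψ : IsTest ψ) {a b : ℝ} (ha : 0 ≤ a) (hb : 0 ≤ b)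
    (hab : a + b = 1) : IsTest (fun x => a * φ x + b * ψ x) := by
  refine ⟨(hφ.1.const_mul a).add (hψ.1.const_mul b), fun x => ⟨?_, ?_⟩⟩
  · exact add_nonneg (mul_nonneg ha (hφ.2 x).1) (mul_nonneg hb (hψ.2 x).1)
  · calc a * φ x + b * ψ x ≤ a * 1 + b * 1 := by gcongr <;> simp [(hφ.2 x).2, (hψ.2 x).2]
      _ = 1 := by rw [mul_one, mul_one, hab]

end IsTest

lemma integral_one_sub_indicator_one (ν : Measure X) {S : Set X} (hS : MeasurableSet S) :
    ∫ x, (1 - S.indicator 1 x) ∂ν = ν.real Sᶜ := by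
  rw [← integral_indicator_one hS.compl, indicator_compl]
  rfl

lemma riskPoint_mem_testRegion (P Q : Measure X) {S : Set X} (hS : MeasurableSet S) :
    riskPoint P Q S ∈ testRegion P Q :=
  ⟨S.indicator 1, IsTest.indicator_one hS, by
    rw [integral_indicator_one hS, integral_one_sub_indicator_one Q hS, riskPoint]⟩

lemma convex_testRegion {P Q : Measure X} [IsFiniteMeasure P] [IsFiniteMeasure Q] :
    Convex ℝ (testRegion P Q) := by
  rintro _ ⟨φ, hφ, rfl⟩ _ ⟨ψ, hψ, rfl⟩ a b ha hb hab
  have hcomb : ∀ (ν : Measure X) [IsFiniteMeasure ν] (f g : X → ℝ), Integrable f ν →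
      Integrable g ν → ∫ x, (a * f x + b * g x) ∂ν = a * ∫ x, f x ∂ν + b * ∫ x, g x ∂ν :=
    fun ν _ f g hf hg => by
      rw [integral_add (hf.const_mul a) (hg.const_mul b), integral_const_mul, integral_const_mul]
  have hsub : ∀ x, 1 - (a * φ x + b * ψ x) = a * (1 - φ x) + b * (1 - ψ x) := fun x => by
    linear_combination -hab
  refine ⟨_, hφ.combo hψ ha hb hab, ?_⟩
  simp only [Prod.smul_mk, Prod.mk_add_mk, smul_eq_mul, hsub]
  rw [hcomb P φ ψ (hφ.integrable P) (hψ.integrable P),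
    hcomb Q (fun x => 1 - φ x) (fun x => 1 - ψ x) ((integrable_const 1).sub (hφ.integrable Q))
      ((integrable_const 1).sub (hψ.integrable Q))]

lemma tendsto_measureReal_iUnion_atTop (ν : Measure X) [IsFiniteMeasure ν] {A : ℕ → Set X}
    (hA : Monotone A) : Tendsto (fun n => ν.real (A n)) atTop (𝓝 (ν.real (⋃ n, A n))) :=
  (ENNReal.tendsto_toReal (measure_ne_top ν _)).comp (tendsto_measure_iUnion_atTop hA)

lemma tendsto_measureReal_iInter_atTop (ν : Measure X) [IsFiniteMeasure ν] {A : ℕ → Set X}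
    (hA_meas : ∀ n, MeasurableSet (A n)) (hA : Antitone A) :
    Tendsto (fun n => ν.real (A n)) atTop (𝓝 (ν.real (⋂ n, A n))) :=
  (ENNReal.tendsto_toReal (measure_ne_top ν _)).comp
    (tendsto_measure_iInter_atTop (fun n => (hA_meas n).nullMeasurableSet) hA
      ⟨0, measure_ne_top ν _⟩)

lemma tendsto_riskPoint_iInter (P Q : Measure X) [IsFiniteMeasure P] [IsFiniteMeasure Q]
    {A : ℕ → Set X} (hA_meas : ∀ n, MeasurableSet (A n)) (hA : Antitone A) :
    Tendsto (fun n => riskPoint P Q (A n)) atTop (𝓝 (riskPoint P Q (⋂ n, A n))) := by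
  refine (tendsto_measureReal_iInter_atTop P hA_meas hA).prodMk_nhds ?_
  rw [compl_iInter]
  exact tendsto_measureReal_iUnion_atTop Q fun m n h => compl_subset_compl.2 (hA h)

section NeymanPearson

variable {μ P Q : Measure X}

/- Densities enter through `toReal`; since they are finite `μ`-a.e., these sets agree a.e. with
their `ℝ≥0∞` versions in `SAttainable`. -/
def lrSet (μ P Q : Measure X) (c : ℝ) : Set X :=
  {x | c * (P.rnDeriv μ x).toReal < (Q.rnDeriv μ x).toReal}

def zeroDensitySet (μ P : Measure X) : Set X := {x | (P.rnDeriv μ x).toReal = 0}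

def IsNPSet (μ P Q : Measure X) (c : ℝ) (S : Set X) : Prop :=
  MeasurableSet S ∧ ∀ᵐ x ∂μ,
    (x ∈ S → c * (P.rnDeriv μ x).toReal ≤ (Q.rnDeriv μ x).toReal) ∧
    (x ∉ S → (Q.rnDeriv μ x).toReal ≤ c * (P.rnDeriv μ x).toReal)

def bayesRisk (μ P Q : Measure X) (c : ℝ) : ℝ :=
  Q.real (lrSet μ P Q c)ᶜ + c * P.real (lrSet μ P Q c)

def aboveRisk (μ P Q : Measure X) : Set (ℝ × ℝ) :=
  {z | ∀ c, bayesRisk μ P Q c ≤ z.2 + c * z.1}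

lemma measurableSet_lrSet (c : ℝ) : MeasurableSet (lrSet μ P Q c) :=
  measurableSet_lt (measurable_const.mul (Measure.measurable_rnDeriv P μ).ennreal_toReal)
    (Measure.measurable_rnDeriv Q μ).ennreal_toReal

lemma measurableSet_zeroDensitySet : MeasurableSet (zeroDensitySet μ P) :=
  (Measure.measurable_rnDeriv P μ).ennreal_toReal (measurableSet_singleton 0)

lemma lrSet_anti {c c' : ℝ} (h : c ≤ c') : lrSet μ P Q c' ⊆ lrSet μ P Q c := fun _ hx =>
  lt_of_le_of_lt (mul_le_mul_of_nonneg_right h ENNReal.toReal_nonneg) hx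

lemma isNPSet_lrSet (c : ℝ) : IsNPSet μ P Q c (lrSet μ P Q c) :=
  ⟨measurableSet_lrSet c, .of_forall fun _ => ⟨fun h => le_of_lt h, fun h => le_of_not_gt h⟩⟩

lemma isNPSet_zero_univ : IsNPSet μ P Q 0 univ :=
  ⟨.univ, .of_forall fun _ => ⟨fun _ => by simp, fun h => absurd (mem_univ _) h⟩⟩

lemma isNPSet_iInter_lrSet {u : ℕ → ℝ} {c : ℝ} (hu_le : ∀ n, u n ≤ c)
    (hu : Tendsto u atTop (𝓝 c)) : IsNPSet μ P Q c (⋂ n, lrSet μ P Q (u n)) := by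
  refine ⟨.iInter fun n => measurableSet_lrSet _, .of_forall fun x => ⟨fun hx => ?_, fun hx => ?_⟩⟩
  · exact le_of_tendsto' (hu.mul_const _) fun n => (mem_iInter.1 hx n).le
  · obtain ⟨n, hn⟩ := not_forall.1 (mt mem_iInter.2 hx)
    exact (le_of_not_gt hn).trans (mul_le_mul_of_nonneg_right (hu_le n) ENNReal.toReal_nonneg)

lemma isClosed_aboveRisk : IsClosed (aboveRisk μ P Q) := by
  rw [aboveRisk, ofPred_forall]
  exact isClosed_iInter fun c => isClosed_le continuous_const
    (continuous_snd.add (continuous_const.mul continuous_fst))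

lemma convex_aboveRisk : Convex ℝ (aboveRisk μ P Q) := by
  rw [aboveRisk, ofPred_forall]
  exact convex_iInter fun c => convex_halfSpace_ge
    ((LinearMap.snd ℝ ℝ ℝ + c • LinearMap.fst ℝ ℝ ℝ).isLinear) (bayesRisk μ P Q c)

lemma measureReal_compl_zeroDensitySet_le [IsFiniteMeasure Q] {a b : ℝ}
    (hab : (a, b) ∈ aboveRisk μ P Q) (ha : a ≤ 0) : Q.real (zeroDensitySet μ P)ᶜ ≤ b := by
  have hbound (n : ℕ) : Q.real (lrSet μ P Q n)ᶜ ≤ b := by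
    have h := hab n
    simp only [bayesRisk] at h
    nlinarith [mul_nonneg n.cast_nonneg (measureReal_nonneg (μ := P) (s := lrSet μ P Q n))]
  have hmono : Monotone fun n : ℕ => (lrSet μ P Q n)ᶜ := fun m n h =>
    compl_subset_compl.2 (lrSet_anti (Nat.cast_le.2 h))
  have hsub : (zeroDensitySet μ P)ᶜ ⊆ ⋃ n : ℕ, (lrSet μ P Q n)ᶜ := by
    intro x hx
    have hp : 0 < (P.rnDeriv μ x).toReal := ENNReal.toReal_nonneg.lt_of_ne' hx
    obtain ⟨n, hn⟩ := exists_nat_ge ((Q.rnDeriv μ x).toReal / (P.rnDeriv μ x).toReal)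
    exact mem_iUnion.2 ⟨n, not_lt.2 ((div_le_iff₀ hp).1 hn)⟩
  exact (measureReal_mono hsub).trans
    (le_of_tendsto' (tendsto_measureReal_iUnion_atTop Q hmono) hbound)

lemma measureReal_zeroDensitySet [IsFiniteMeasure P] [SigmaFinite μ] (hP : P ≪ μ) :
    P.real (zeroDensitySet μ P) = 0 := by
  have h (x : X) : (P.rnDeriv μ x).toReal * (zeroDensitySet μ P).indicator 1 x = 0 := by
    by_cases hx : x ∈ zeroDensitySet μ P
    · rw [show (P.rnDeriv μ x).toReal = 0 from hx, zero_mul]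
    · rw [indicator_of_notMem hx, mul_zero]
  rw [← integral_indicator_one measurableSet_zeroDensitySet, ← integral_toReal_rnDeriv_mul hP]
  simp only [h, integral_zero]

lemma measureReal_lrSet_le_of_forall_gt [IsFiniteMeasure P] {c₀ α : ℝ}
    (h : ∀ c > c₀, P.real (lrSet μ P Q c) ≤ α) : P.real (lrSet μ P Q c₀) ≤ α := by
  have hmono : Monotone fun n : ℕ => lrSet μ P Q (c₀ + 1 / (n + 1)) := fun m n hmn =>
    lrSet_anti (by gcongr)
  have hsub : lrSet μ P Q c₀ ⊆ ⋃ n : ℕ, lrSet μ P Q (c₀ + 1 / (n + 1)) := by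
    intro x hx
    have hu : Tendsto (fun n : ℕ => (c₀ + 1 / (n + 1)) * (P.rnDeriv μ x).toReal) atTop
        (𝓝 (c₀ * (P.rnDeriv μ x).toReal)) := by
      simpa using (tendsto_one_div_add_atTop_nhds_zero_nat.const_add c₀).mul_const
        (P.rnDeriv μ x).toReal
    exact mem_iUnion.2 (hu.eventually (gt_mem_nhds hx)).exists
  exact (measureReal_mono hsub).trans
    (le_of_tendsto' (tendsto_measureReal_iUnion_atTop P hmono) fun n => h _ (by simp; positivity))

lemma exists_isNPSet_le_measureReal [IsFiniteMeasure P] [IsFiniteMeasure Q] {K : Set (ℝ × ℝ)}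
    (hK : ∀ c, 0 ≤ c → riskPoint P Q (lrSet μ P Q c) ∈ K) {c₀ α : ℝ} (hc₀ : 0 < c₀)
    (hgt : ∀ c ∈ Ico 0 c₀, α < P.real (lrSet μ P Q c)) :
    ∃ W, IsNPSet μ P Q c₀ W ∧ riskPoint P Q W ∈ closure K ∧ α ≤ P.real W := by
  -- `W` stands in for `{c₀ p ≤ q}`: unlike that set, it is a limit of attainable sets.
  obtain ⟨u, hu_mono, hu_mem, hu⟩ := exists_seq_strictMono_tendsto' hc₀
  have hanti : Antitone fun n => lrSet μ P Q (u n) := fun m n h =>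
    lrSet_anti (hu_mono.monotone h)
  have hmeas (n : ℕ) : MeasurableSet (lrSet μ P Q (u n)) := measurableSet_lrSet _
  refine ⟨_, isNPSet_iInter_lrSet (fun n => (hu_mem n).2.le) hu,
    mem_closure_of_tendsto (tendsto_riskPoint_iInter P Q hmeas hanti)
      (.of_forall fun n => hK _ (hu_mem n).1.le), ?_⟩
  exact ge_of_tendsto' (tendsto_measureReal_iInter_atTop P hmeas hanti) fun n =>
    (hgt _ ⟨(hu_mem n).1.le, (hu_mem n).2⟩).le

section

variable [IsFiniteMeasure P] [IsFiniteMeasure Q] [SigmaFinite μ] (hP : P ≪ μ) (hQ : Q ≪ μ)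
include hP hQ

lemma integrable_rnDeriv_combination {f g : X → ℝ} (hf : Integrable f Q) (hg : Integrable g P)
    (c : ℝ) : Integrable (fun x => (Q.rnDeriv μ x).toReal * f x +
      c * ((P.rnDeriv μ x).toReal * g x)) μ :=
  ((integrable_toReal_rnDeriv_mul_iff hQ).2 hf).add
    (((integrable_toReal_rnDeriv_mul_iff hP).2 hg).const_mul c)

lemma integral_rnDeriv_combination {f g : X → ℝ} (hf : Integrable f Q) (hg : Integrable g P)
    (c : ℝ) : ∫ x, ((Q.rnDeriv μ x).toReal * f x + c * ((P.rnDeriv μ x).toReal * g x)) ∂μ =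
      ∫ x, f x ∂Q + c * ∫ x, g x ∂P := by
  rw [integral_add ((integrable_toReal_rnDeriv_mul_iff hQ).2 hf)
      (((integrable_toReal_rnDeriv_mul_iff hP).2 hg).const_mul c),
    integral_const_mul, integral_toReal_rnDeriv_mul hQ, integral_toReal_rnDeriv_mul hP]

theorem neymanPearson {c : ℝ} {S : Set X} (hS : IsNPSet μ P Q c S) {φ : X → ℝ}
    (hφ : IsTest φ) : Q.real Sᶜ + c * P.real S ≤ ∫ x, (1 - φ x) ∂Q + c * ∫ x, φ x ∂P := by
  have hψ := (IsTest.indicator_one hS.1).integrable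
  have hψ' : Integrable (fun x => 1 - S.indicator (1 : X → ℝ) x) Q :=
    (integrable_const 1).sub (hψ Q)
  have hφ' : Integrable (fun x => 1 - φ x) Q := (integrable_const 1).sub (hφ.integrable Q)
  rw [← integral_indicator_one hS.1, ← integral_one_sub_indicator_one Q hS.1,
    ← integral_rnDeriv_combination hP hQ hψ' (hψ P),
    ← integral_rnDeriv_combination hP hQ hφ' (hφ.integrable P)]
  refine integral_mono_ae (integrable_rnDeriv_combination hP hQ hψ' (hψ P) c)
    (integrable_rnDeriv_combination hP hQ hφ' (hφ.integrable P) c) ?_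
  filter_upwards [hS.2] with x ⟨hin, hout⟩
  obtain ⟨h0, h1⟩ := hφ.2 x
  by_cases hx : x ∈ S
  · simp only [indicator_of_mem hx, Pi.one_apply, sub_self, mul_zero, zero_add, mul_one]
    nlinarith [mul_le_mul_of_nonneg_right (hin hx) (sub_nonneg.2 h1)]
  · simp only [indicator_of_notMem hx, sub_zero, mul_one, mul_zero, add_zero]
    nlinarith [mul_le_mul_of_nonneg_right (hout hx) h0]

lemma IsNPSet.risk_eq {c : ℝ} {S T : Set X} (hS : IsNPSet μ P Q c S) (hT : IsNPSet μ P Q c T) :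
    Q.real Sᶜ + c * P.real S = Q.real Tᶜ + c * P.real T := by
  have key {S T : Set X} (hS : IsNPSet μ P Q c S) (hT : MeasurableSet T) :
      Q.real Sᶜ + c * P.real S ≤ Q.real Tᶜ + c * P.real T := by
    simpa only [integral_one_sub_indicator_one Q hT, integral_indicator_one hT] using
      neymanPearson hP hQ hS (IsTest.indicator_one hT)
  exact (key hS hT.1).antisymm (key hT hS.1)

lemma bayesRisk_eq {c : ℝ} {S : Set X} (hS : IsNPSet μ P Q c S) :
    bayesRisk μ P Q c = Q.real Sᶜ + c * P.real S :=
  (isNPSet_lrSet c).risk_eq hP hQ hS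

lemma testRegion_subset_aboveRisk : testRegion P Q ⊆ aboveRisk μ P Q := by
  rintro _ ⟨φ, hφ, rfl⟩ c
  exact neymanPearson hP hQ (isNPSet_lrSet c) hφ

lemma closure_convexHull_subset_aboveRisk {𝒮 : Set (Set X)}
    (hmeas : ∀ S ∈ 𝒮, MeasurableSet S) :
    closure (convexHull ℝ (riskPoint P Q '' 𝒮)) ⊆ aboveRisk μ P Q :=
  closure_minimal (convexHull_min (image_subset_iff.2 fun S hS =>
      testRegion_subset_aboveRisk hP hQ (riskPoint_mem_testRegion P Q (hmeas S hS)))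
    convex_aboveRisk) isClosed_aboveRisk

lemma mul_measureReal_lrSet_le (c : ℝ) : c * P.real (lrSet μ P Q c) ≤ Q.real univ := by
  have h := neymanPearson hP hQ (isNPSet_lrSet c) (φ := fun _ => 0)
    ⟨measurable_const, fun _ => ⟨le_rfl, zero_le_one⟩⟩
  simp only [sub_zero, integral_const, smul_eq_mul, mul_one, mul_zero,
    add_zero] at h
  linarith [measureReal_nonneg (μ := Q) (s := (lrSet μ P Q c)ᶜ)]

lemma exists_optimal_point_of_isNPSet {C : Set (ℝ × ℝ)} (hC : Convex ℝ C) {c α : ℝ} (hc : 0 ≤ c)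
    {S W : Set X} (hS : IsNPSet μ P Q c S) (hW : IsNPSet μ P Q c W) (hSC : riskPoint P Q S ∈ C)
    (hWC : riskPoint P Q W ∈ C) (hSα : P.real S ≤ α) (hWα : α ≤ P.real W) :
    ∃ b, (α, b) ∈ C ∩ testRegion P Q ∧
      ∀ a b', a ≤ α → (a, b') ∈ aboveRisk μ P Q → b ≤ b' := by
  obtain ⟨θ, η, hθ, hη, hθη, hα⟩ : α ∈ segment ℝ (P.real S) (P.real W) := by
    rw [segment_eq_Icc (hSα.trans hWα)]
    exact ⟨hSα, hWα⟩
  simp only [smul_eq_mul] at hα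
  have hpt : θ • riskPoint P Q S + η • riskPoint P Q W =
      (α, θ * Q.real Sᶜ + η * Q.real Wᶜ) := by
    simp [riskPoint, ← hα]
  refine ⟨θ * Q.real Sᶜ + η * Q.real Wᶜ, hpt ▸ ⟨hC hSC hWC hθ hη hθη,
    convex_testRegion (riskPoint_mem_testRegion P Q hS.1) (riskPoint_mem_testRegion P Q hW.1)
      hθ hη hθη⟩, fun a b' ha hab' => ?_⟩
  have hline := hab' c
  rw [bayesRisk_eq hP hQ hS] at hline
  -- `S` and `W` have the same risk, so the mixed point lies on the supporting line of slope `c`.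
  have hb : θ * Q.real Sᶜ + η * Q.real Wᶜ = Q.real Sᶜ + c * P.real S - c * α := by
    linear_combination (-c) * hα + (Q.real Sᶜ + c * P.real S) * hθη - η * hS.risk_eq hP hQ hW
  linarith [mul_le_mul_of_nonneg_left ha hc]

end

lemma exists_threshold [IsFiniteMeasure P] [IsProbabilityMeasure Q] [SigmaFinite μ]
    (hP : P ≪ μ) (hQ : Q ≪ μ) {α : ℝ} (hα : 0 < α) :
    ∃ c₀, 0 ≤ c₀ ∧ P.real (lrSet μ P Q c₀) ≤ α ∧
      ∀ c ∈ Ico 0 c₀, α < P.real (lrSet μ P Q c) := by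
  set U := {c | 0 ≤ c ∧ P.real (lrSet μ P Q c) ≤ α}
  have hU : α⁻¹ ∈ U := by
    refine ⟨inv_nonneg.2 hα.le, ?_⟩
    have h := mul_measureReal_lrSet_le hP hQ α⁻¹
    rwa [probReal_univ, inv_mul_le_iff₀ hα, mul_one] at h
  have hbdd : BddBelow U := ⟨0, fun c hc => hc.1⟩
  refine ⟨sInf U, le_csInf ⟨_, hU⟩ fun c hc => hc.1,
    measureReal_lrSet_le_of_forall_gt fun c hc => ?_, fun c hc => ?_⟩
  · obtain ⟨d, hdU, hdc⟩ := exists_lt_of_csInf_lt ⟨_, hU⟩ hc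
    exact (measureReal_mono (lrSet_anti hdc.le)).trans hdU.2
  · by_contra! h
    exact (csInf_le hbdd ⟨hc.1, h⟩).not_gt hc.2

lemma exists_optimal_point [IsProbabilityMeasure P] [IsProbabilityMeasure Q] [SigmaFinite μ]
    (hP : P ≪ μ) (hQ : Q ≪ μ) {K : Set (ℝ × ℝ)}
    (hK : ∀ c, 0 ≤ c → riskPoint P Q (lrSet μ P Q c) ∈ K)
    (hZ : riskPoint P Q (zeroDensitySet μ P) ∈ K) (huniv : riskPoint P Q univ ∈ K)
    {α : ℝ} (hα : α ∈ Icc (0 : ℝ) 1) :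
    ∃ b, (α, b) ∈ closure (convexHull ℝ K) ∩ testRegion P Q ∧
      ∀ a b', a ≤ α → (a, b') ∈ aboveRisk μ P Q → b ≤ b' := by
  have hKC : K ⊆ closure (convexHull ℝ K) := (subset_convexHull ℝ K).trans subset_closure
  rcases hα.1.eq_or_lt with rfl | hα0
  · have hZ0 : riskPoint P Q (zeroDensitySet μ P) = (0, Q.real (zeroDensitySet μ P)ᶜ) := by
      rw [riskPoint, measureReal_zeroDensitySet hP]
    exact ⟨_, hZ0 ▸ ⟨hKC hZ, riskPoint_mem_testRegion P Q measurableSet_zeroDensitySet⟩,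
      fun a b' ha hab' => measureReal_compl_zeroDensitySet_le hab' ha⟩
  obtain ⟨c₀, hc₀, hs, hgt⟩ := exists_threshold hP hQ hα0
  obtain ⟨W, hW, hWC, hWα⟩ : ∃ W, IsNPSet μ P Q c₀ W ∧
      riskPoint P Q W ∈ closure (convexHull ℝ K) ∧ α ≤ P.real W := by
    rcases hc₀.eq_or_lt with rfl | hc₀
    · exact ⟨univ, isNPSet_zero_univ, hKC huniv, by simpa using hα.2⟩
    · obtain ⟨W, hW, hWK, hWα⟩ := exists_isNPSet_le_measureReal hK hc₀ hgt
      exact ⟨W, hW, closure_mono (subset_convexHull ℝ K) hWK, hWα⟩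
  exact exists_optimal_point_of_isNPSet hP hQ (convex_convexHull ℝ K).closure hc₀
    (isNPSet_lrSet c₀) hW (hKC (hK c₀ hc₀)) hWC hs hWα

end NeymanPearson

section Attainable

variable {P Q : Measure X}

lemma absolutelyContinuous_half_add_left : P ≪ (2 : ℝ≥0∞)⁻¹ • (P + Q) :=
  ((Measure.AbsolutelyContinuous.refl P).add_right Q).trans
    (Measure.absolutelyContinuous_smul (by simp))

lemma absolutelyContinuous_half_add_right : Q ≪ (2 : ℝ≥0∞)⁻¹ • (P + Q) := by
  rw [add_comm]
  exact absolutelyContinuous_half_add_left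

lemma riskPoint_congr_ae {μ : Measure X} (hP : P ≪ μ) (hQ : Q ≪ μ) {S T : Set X}
    (h : S =ᵐ[μ] T) : riskPoint P Q S = riskPoint P Q T := by
  rw [riskPoint, riskPoint, measureReal_congr (hP.ae_eq h), measureReal_congr (hQ.ae_eq h.compl)]

namespace SAttainable

variable [SigmaFinite P] {𝒮 : Set (Set X)} (hatt : SAttainable 𝒮 P Q)
include hatt

lemma riskPoint_lrSet_mem [SigmaFinite Q] {c : ℝ} (hc : 0 ≤ c) :
    riskPoint P Q (lrSet ((2 : ℝ≥0∞)⁻¹ • (P + Q)) P Q c) ∈ riskPoint P Q '' 𝒮 := by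
  obtain ⟨S, hS, hae⟩ := hatt (ENNReal.ofReal c)
  refine ⟨S, hS, riskPoint_congr_ae absolutelyContinuous_half_add_left
    absolutelyContinuous_half_add_right (eventuallyEq_set.2 ?_)⟩
  filter_upwards [hae, Measure.rnDeriv_lt_top P _, Measure.rnDeriv_lt_top Q _] with x hx hp hq
  rw [hx, lrSet, mem_ofPred_eq, ← ENNReal.toReal_ofReal hc, ← ENNReal.toReal_mul,
    ENNReal.toReal_lt_toReal (ENNReal.mul_ne_top ENNReal.ofReal_ne_top hp.ne) hq.ne]
  simp

lemma riskPoint_zeroDensitySet_mem :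
    riskPoint P Q (zeroDensitySet ((2 : ℝ≥0∞)⁻¹ • (P + Q)) P) ∈ riskPoint P Q '' 𝒮 := by
  obtain ⟨S, hS, hae⟩ := hatt ⊤
  refine ⟨S, hS, riskPoint_congr_ae absolutelyContinuous_half_add_left
    absolutelyContinuous_half_add_right (eventuallyEq_set.2 ?_)⟩
  filter_upwards [hae, Measure.rnDeriv_lt_top P _] with x hx hp
  simp [hx, zeroDensitySet, ENNReal.toReal_eq_zero_iff, hp.ne, -smul_add]

end SAttainable

end Attainable

end HypothesisTesting

open HypothesisTesting in
theorem stmt6_general {X : Type*} [MeasurableSpace X] (P Q : Measure X)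
    [IsProbabilityMeasure P] [IsProbabilityMeasure Q]
    (𝒮 : Set (Set X)) (hmeas : ∀ A ∈ 𝒮, MeasurableSet A)
    (huniv : univ ∈ 𝒮)
    (hatt : SAttainable 𝒮 P Q) :
    ∀ α ∈ Icc (0:ℝ) 1,
      tradeoff P Q α =
        sInf {b : ℝ | (α, b) ∈
          closure (convexHull ℝ {p : ℝ × ℝ | ∃ S ∈ 𝒮, p = ((P S).toReal, (Q Sᶜ).toReal)})} := by
  intro α hα
  have := (P + Q).smul_finite (c := (2 : ℝ≥0∞)⁻¹) (by simp)
  have hP := absolutelyContinuous_half_add_left (P := P) (Q := Q)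
  have hQ := absolutelyContinuous_half_add_right (P := P) (Q := Q)
  have hK : {p : ℝ × ℝ | ∃ S ∈ 𝒮, p = ((P S).toReal, (Q Sᶜ).toReal)} = riskPoint P Q '' 𝒮 := by
    ext z
    simp [riskPoint, measureReal_def, eq_comm]
  obtain ⟨b, ⟨hbC, φ, hφ, hφb⟩, hb_le⟩ := exists_optimal_point hP hQ
    (fun c hc => hatt.riskPoint_lrSet_mem hc) hatt.riskPoint_zeroDensitySet_mem
    ⟨univ, huniv, rfl⟩ hα
  obtain ⟨hφα, rfl⟩ := Prod.mk.inj hφb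
  rw [tradeoff, hK]
  refine (IsLeast.csInf_eq (a := ∫ x, (1 - φ x) ∂Q) ?_).trans (IsLeast.csInf_eq ?_).symm
  · refine ⟨⟨φ, hφ.1, hφ.2, hφα.ge, rfl⟩, ?_⟩
    rintro _ ⟨ψ, hψm, hψ, hψα, rfl⟩
    exact hb_le _ _ hψα (testRegion_subset_aboveRisk hP hQ ⟨ψ, ⟨hψm, hψ⟩, rfl⟩)
  · exact ⟨hbC, fun b' hb' =>
      hb_le α b' le_rfl (closure_convexHull_subset_aboveRisk hP hQ hmeas hb')⟩

/-- under `𝒮`-attainability, for all `α ∈ [0,1]`,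
`T(P,Q)(α) = inf { β : (α,β) ∈ closed convex hull of {(P(S), Q(Sᶜ)) : S ∈ 𝒮} }`. -/
theorem stmt6 {X : Type*} [MeasurableSpace X] (P Q : Measure X)
    [IsProbabilityMeasure P] [IsProbabilityMeasure Q]
    (𝒮 : Set (Set X)) (hmeas : ∀ A ∈ 𝒮, MeasurableSet A)
    (hempty : ∅ ∈ 𝒮) (huniv : univ ∈ 𝒮)
    (hatt : SAttainable 𝒮 P Q) :
    ∀ α ∈ Icc (0:ℝ) 1,
      tradeoff P Q α =
        sInf {b : ℝ | (α, b) ∈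
          closure (convexHull ℝ {p : ℝ × ℝ | ∃ S ∈ 𝒮, p = ((P S).toReal, (Q Sᶜ).toReal)})} :=
  stmt6_general P Q 𝒮 hmeas huniv hatt
end

section
/- For τ∈(0,1/2], the function h₊(t) = min{ t + √(τ·min{t,(1−t)_+}) + τ, 1 } is concave and non-decreasing on [0,1]. -/
/-!
On `[0, 1]` we have `√(τ V(t)) = min (√(τ t)) (√(τ (1 - t)))`, so `h₊` is a minimum of concave
functions, hence concave. Since `h₊ ≤ 1 = h₊(1)`, its maximum on `[0, 1]` is attained at the right
endpoint, and a concave function with that property is non-decreasing: for `x ≤ y ≤ 1`, concavity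
gives `h₊(y) ≥ min (h₊ x) (h₊ 1) = h₊ x`.
-/

open Set

/-- `V(t) = min{t, (1-t)₊}`. -/
noncomputable def Vfun (t : ℝ) : ℝ := min t (max (1 - t) 0)

/-- `h₊(t) = min{ t + √(τ V(t)) + τ, 1 }`. -/
noncomputable def hplus (τ t : ℝ) : ℝ := min (t + Real.sqrt (τ * Vfun t) + τ) 1

theorem ConcaveOn.monotoneOn_of_isGreatest {𝕜 β : Type*} [Field 𝕜] [LinearOrder 𝕜]
    [IsStrictOrderedRing 𝕜] [AddCommGroup β] [LinearOrder β] [IsOrderedAddMonoid β] [Module 𝕜 β]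
    [IsStrictOrderedModule 𝕜 β] {s : Set 𝕜} {f : 𝕜 → β} {b : 𝕜} (hf : ConcaveOn 𝕜 s f)
    (hb : IsGreatest s b) (hfb : ∀ x ∈ s, f x ≤ f b) : MonotoneOn f s := by
  intro x hx y hy hxy
  calc f x = min (f x) (f b) := (min_eq_left (hfb x hx)).symm
    _ ≤ f y := hf.min_le_of_mem_Icc hx hb.1 ⟨hxy, hb.2 hy⟩

theorem concaveOn_sqrt_comp_affineMap {E : Type*} [AddCommGroup E] [Module ℝ E]
    (g : E →ᵃ[ℝ] ℝ) : ConcaveOn ℝ (g ⁻¹' Ici 0) (fun x => √(g x)) :=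
  Real.strictConcaveOn_sqrt.concaveOn.comp_affineMap g

theorem sqrt_mul_Vfun {τ t : ℝ} (hτ : 0 ≤ τ) (ht : t ≤ 1) :
    √(τ * Vfun t) = min √(τ * t) √(τ * (1 - t)) := by
  rw [Vfun, max_eq_left (sub_nonneg.2 ht), mul_min_of_nonneg _ _ hτ]
  exact Real.sqrt_monotone.map_min

theorem hplus_one {τ : ℝ} (hτ : 0 ≤ τ) : hplus τ 1 = 1 := by
  simp [hplus, Vfun, hτ]

theorem concaveOn_hplus {τ : ℝ} (hτ : 0 ≤ τ) : ConcaveOn ℝ (Icc 0 1) (hplus τ) := by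
  have hI : Convex ℝ (Icc (0:ℝ) 1) := convex_Icc 0 1
  have hleft : ConcaveOn ℝ (Icc 0 1) fun t => √(τ * t) :=
    (concaveOn_sqrt_comp_affineMap (τ • AffineMap.id ℝ ℝ)).subset
      (fun t ht => mul_nonneg hτ ht.1) hI
  have hright : ConcaveOn ℝ (Icc 0 1) fun t => √(τ * (1 - t)) :=
    (concaveOn_sqrt_comp_affineMap (τ • (AffineMap.const ℝ ℝ 1 - AffineMap.id ℝ ℝ))).subset
      (fun t ht => mul_nonneg hτ (sub_nonneg.2 ht.2)) hI
  have hmin := (((concaveOn_id hI).add (hleft.inf hright)).add (concaveOn_const τ hI)).inf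
    (concaveOn_const 1 hI)
  refine hmin.congr fun t ht => ?_
  simp only [hplus, sqrt_mul_Vfun hτ ht.2]
  rfl

theorem monotoneOn_hplus {τ : ℝ} (hτ : 0 ≤ τ) : MonotoneOn (hplus τ) (Icc 0 1) :=
  (concaveOn_hplus hτ).monotoneOn_of_isGreatest (isGreatest_Icc zero_le_one)
    fun _ _ => by rw [hplus_one hτ]; exact min_le_right _ _

/-- for `τ ∈ (0, 1/2]`, `h₊` is concave and non-decreasing on `[0,1]`. -/
theorem stmt8 (τ : ℝ) (hτ : τ ∈ Ioc (0:ℝ) (1/2)) :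
    ConcaveOn ℝ (Icc (0:ℝ) 1) (hplus τ) ∧ MonotoneOn (hplus τ) (Icc (0:ℝ) 1) :=
  ⟨concaveOn_hplus hτ.1.le, monotoneOn_hplus hτ.1.le⟩
end

section
/- Let f₀:[0,1]→[0,1] be a trade-off function (convex, continuous, non-increasing, f₀(1)=0). Define the density r(x) = 1_{[f₀(0)−1, 0)}(x) − (f₀)'₊(x)·1_{[0,1]}(x), where (f₀)'₊ is the right derivative. Then r is a probability density on ℝ, and the associated measure R satisfies R((x,∞)) = f₀(x) for every x∈[0,1]. -/
/-!
The density is the uniform density on `[f₀ 0 - 1, 0)` minus the right derivative of `f₀` on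
`[0, 1]`. Since `f₀` is convex and antitone, its right derivative is nonpositive, integrable
(as a one-signed right derivative of a continuous function), and obeys the fundamental theorem of
calculus `∫ t in x..1, (f₀)'₊ t = f₀ 1 - f₀ x = -f₀ x`. This gives the tail formula, and the total
mass `(1 - f₀ 0) + f₀ 0 = 1`.
-/

open Set MeasureTheory

/-- The density `r(x) = 1_{[f₀(0)−1, 0)}(x) − (f₀)'₊(x)·1_{[0,1]}(x)`, where the right
derivative is `derivWithin f₀ (Ici x) x`. -/
noncomputable def rdens (f₀ : ℝ → ℝ) (x : ℝ) : ℝ :=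
  (Ico (f₀ 0 - 1) 0).indicator (fun _ => (1:ℝ)) x
    - derivWithin f₀ (Ici x) x * (Icc (0:ℝ) 1).indicator (fun _ => (1:ℝ)) x

namespace ConvexOn

variable {f : ℝ → ℝ} {a b x : ℝ}

lemma hasDerivWithinAt_rightDeriv_of_mem_Ioo (hf : ConvexOn ℝ (Icc a b) f) (hx : x ∈ Ioo a b) :
    HasDerivWithinAt f (derivWithin f (Ici x) x) (Ioi x) x := by
  rw [← derivWithin_Ioi_eq_Ici]
  exact hf.hasDerivWithinAt_rightDeriv_of_mem_interior (by rwa [interior_Icc])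

lemma rightDeriv_nonpos_of_antitoneOn (hf : ConvexOn ℝ (Icc a b) f)
    (hanti : AntitoneOn f (Icc a b)) (hx : x ∈ Ioo a b) : derivWithin f (Ici x) x ≤ 0 := by
  have hxb : x < b := hx.2
  have hb : b ∈ Icc a b := right_mem_Icc.2 (hx.1.trans hxb).le
  calc derivWithin f (Ici x) x = derivWithin f (Ioi x) x := (derivWithin_Ioi_eq_Ici f x).symm
    _ ≤ slope f x b := hf.rightDeriv_le_slope_of_mem_interior (by rwa [interior_Icc]) hb hxb
    _ ≤ 0 := by
      rw [slope_def_field]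
      exact div_nonpos_of_nonpos_of_nonneg
        (sub_nonpos.2 (hanti (Ioo_subset_Icc_self hx) hb hxb.le)) (sub_nonneg.2 hxb.le)

-- Only almost everywhere: at `b` the right derivative depends on `f` outside `[a, b]`.
lemma ae_indicator_rightDeriv_nonpos_of_antitoneOn (hf : ConvexOn ℝ (Icc a b) f)
    (hanti : AntitoneOn f (Icc a b)) :
    ∀ᵐ x, (Icc a b).indicator (fun t ↦ derivWithin f (Ici t) t) x ≤ 0 := by
  filter_upwards [indicator_ae_eq_of_ae_eq_set (f := fun t ↦ derivWithin f (Ici t) t)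
    (Ioo_ae_eq_Icc (μ := volume))] with x hx
  rw [← hx]
  exact indicator_nonpos (fun t ht ↦ hf.rightDeriv_nonpos_of_antitoneOn hanti ht) x

lemma integrableOn_rightDeriv_of_antitoneOn (hf : ConvexOn ℝ (Icc a b) f)
    (hcont : ContinuousOn f (Icc a b)) (hanti : AntitoneOn f (Icc a b)) :
    IntegrableOn (fun t ↦ derivWithin f (Ici t) t) (Icc a b) := by
  rw [integrableOn_Icc_iff_integrableOn_Ioc]
  simpa using (intervalIntegral.integrableOn_deriv_right_of_nonneg hcont.neg
    (fun t ht ↦ (hf.hasDerivWithinAt_rightDeriv_of_mem_Ioo ht).neg)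
    (fun t ht ↦ neg_nonneg.2 (hf.rightDeriv_nonpos_of_antitoneOn hanti ht))).neg

lemma integral_rightDeriv_of_antitoneOn (hf : ConvexOn ℝ (Icc a b) f)
    (hcont : ContinuousOn f (Icc a b)) (hanti : AntitoneOn f (Icc a b)) (hx : x ∈ Icc a b) :
    ∫ t in x..b, derivWithin f (Ici t) t = f b - f x := by
  have hsub : Icc x b ⊆ Icc a b := Icc_subset_Icc_left hx.1
  refine intervalIntegral.integral_eq_sub_of_hasDeriv_right_of_le hx.2 (hcont.mono hsub)
    (fun t ht ↦ hf.hasDerivWithinAt_rightDeriv_of_mem_Ioo (Ioo_subset_Ioo_left hx.1 ht)) ?_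
  exact (intervalIntegrable_iff_integrableOn_Icc_of_le hx.2).2
    ((hf.integrableOn_rightDeriv_of_antitoneOn hcont hanti).mono_set hsub)

end ConvexOn

lemma toReal_withDensity_ofReal_apply {α : Type*} [MeasurableSpace α] {μ : Measure α}
    {r : α → ℝ} (hr : Integrable r μ) (hr0 : 0 ≤ᵐ[μ] r) {s : Set α} (hs : MeasurableSet s) :
    ((μ.withDensity fun y ↦ ENNReal.ofReal (r y)) s).toReal = ∫ y in s, r y ∂μ := by
  rw [withDensity_apply _ hs, ← ofReal_integral_eq_lintegral_ofReal hr.integrableOn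
    (ae_restrict_of_ae hr0), ENNReal.toReal_ofReal (integral_nonneg_of_ae (ae_restrict_of_ae hr0))]

section rdens

variable {f₀ : ℝ → ℝ}

lemma rdens_eq : rdens f₀ = (Ico (f₀ 0 - 1) 0).indicator 1
    - (Icc 0 1).indicator (fun t ↦ derivWithin f₀ (Ici t) t) := by
  ext x
  by_cases hx : x ∈ Icc (0 : ℝ) 1 <;> simp [rdens, hx] <;> rfl

lemma rdens_eq_of_nonneg {x : ℝ} (hx : 0 ≤ x) :
    rdens f₀ x = -(Icc 0 1).indicator (fun t ↦ derivWithin f₀ (Ici t) t) x := by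
  simp [rdens_eq, indicator_of_notMem (fun h : x ∈ Ico (f₀ 0 - 1) 0 ↦ hx.not_gt h.2)]

lemma ae_nonneg_rdens (hconv : ConvexOn ℝ (Icc 0 1) f₀) (hanti : AntitoneOn f₀ (Icc 0 1)) :
    0 ≤ᵐ[volume] rdens f₀ := by
  filter_upwards [hconv.ae_indicator_rightDeriv_nonpos_of_antitoneOn hanti] with x hx
  rw [rdens_eq]
  exact sub_nonneg.2 (hx.trans (indicator_nonneg (fun _ _ ↦ zero_le_one) x))

lemma integrable_indicator_one_Ico (a b : ℝ) :
    Integrable ((Ico a b).indicator (1 : ℝ → ℝ)) :=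
  (integrableOn_const (by simp)).integrable_indicator measurableSet_Ico

lemma integrable_rdens (hconv : ConvexOn ℝ (Icc 0 1) f₀) (hcont : ContinuousOn f₀ (Icc 0 1))
    (hanti : AntitoneOn f₀ (Icc 0 1)) : Integrable (rdens f₀) := by
  rw [rdens_eq]
  exact (integrable_indicator_one_Ico _ _).sub
    ((hconv.integrableOn_rightDeriv_of_antitoneOn hcont hanti).integrable_indicator
      measurableSet_Icc)

lemma integral_Ioc_rightDeriv (hconv : ConvexOn ℝ (Icc 0 1) f₀)
    (hcont : ContinuousOn f₀ (Icc 0 1)) (hanti : AntitoneOn f₀ (Icc 0 1)) (h1 : f₀ 1 = 0)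
    {x : ℝ} (hx : x ∈ Icc (0 : ℝ) 1) : ∫ t in Ioc x 1, derivWithin f₀ (Ici t) t = -f₀ x := by
  rw [← intervalIntegral.integral_of_le hx.2,
    hconv.integral_rightDeriv_of_antitoneOn hcont hanti hx, h1, zero_sub]

lemma integral_rdens (hconv : ConvexOn ℝ (Icc 0 1) f₀) (hcont : ContinuousOn f₀ (Icc 0 1))
    (hanti : AntitoneOn f₀ (Icc 0 1)) (h1 : f₀ 1 = 0) (h0 : f₀ 0 ≤ 1) :
    ∫ x, rdens f₀ x = 1 := by
  have hint := (hconv.integrableOn_rightDeriv_of_antitoneOn hcont hanti).integrable_indicator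
    measurableSet_Icc
  rw [rdens_eq, Pi.sub_def, integral_sub (integrable_indicator_one_Ico _ _) hint,
    integral_indicator_one measurableSet_Ico, Real.volume_real_Ico_of_le (by linarith),
    integral_indicator measurableSet_Icc, integral_Icc_eq_integral_Ioc,
    integral_Ioc_rightDeriv hconv hcont hanti h1 (left_mem_Icc.2 zero_le_one)]
  ring

lemma setIntegral_Ioi_rdens (hconv : ConvexOn ℝ (Icc 0 1) f₀)
    (hcont : ContinuousOn f₀ (Icc 0 1)) (hanti : AntitoneOn f₀ (Icc 0 1)) (h1 : f₀ 1 = 0)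
    {x : ℝ} (hx : x ∈ Icc (0 : ℝ) 1) : ∫ y in Ioi x, rdens f₀ y = f₀ x := by
  have hIoc : Ioi x ∩ Icc 0 1 = Ioc x 1 := by
    ext y
    exact ⟨fun ⟨hxy, _, hy1⟩ ↦ ⟨hxy, hy1⟩, fun ⟨hxy, hy1⟩ ↦ ⟨hxy, hx.1.trans hxy.le, hy1⟩⟩
  rw [setIntegral_congr_fun measurableSet_Ioi
      (fun y hy ↦ rdens_eq_of_nonneg (hx.1.trans (le_of_lt hy))),
    integral_neg, setIntegral_indicator measurableSet_Icc, hIoc,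
    integral_Ioc_rightDeriv hconv hcont hanti h1 hx, neg_neg]

end rdens

/-- for a trade-off function `f₀` (convex, continuous, non-increasing,
`f₀(1)=0`, values in `[0,1]`), `r` is a probability density on `ℝ` and the associated
measure `R = r·Leb` satisfies `R((x,∞)) = f₀(x)` for all `x ∈ [0,1]`. -/
theorem stmt16 (f₀ : ℝ → ℝ)
    (hconv : ConvexOn ℝ (Icc (0:ℝ) 1) f₀) (hcont : ContinuousOn f₀ (Icc (0:ℝ) 1))
    (hanti : AntitoneOn f₀ (Icc (0:ℝ) 1)) (h1 : f₀ 1 = 0)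
    (hrange : ∀ t ∈ Icc (0:ℝ) 1, f₀ t ∈ Icc (0:ℝ) 1) :
    (∀ᵐ x ∂(volume : Measure ℝ), 0 ≤ rdens f₀ x) ∧
    (∫ x, rdens f₀ x = 1) ∧
    ∀ x ∈ Icc (0:ℝ) 1,
      ((volume.withDensity (fun y => ENNReal.ofReal (rdens f₀ y))) (Ioi x)).toReal = f₀ x := by
  have hr_nonneg := ae_nonneg_rdens hconv hanti
  refine ⟨hr_nonneg, integral_rdens hconv hcont hanti h1 (hrange 0 ⟨le_rfl, zero_le_one⟩).2,
    fun x hx ↦ ?_⟩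
  rw [toReal_withDensity_ofReal_apply (integrable_rdens hconv hcont hanti) hr_nonneg
    measurableSet_Ioi]
  exact setIntegral_Ioi_rdens hconv hcont hanti h1 hx
end

section
/- Let P be uniform on [0,1] and R the measure with density r(x)=1_{[f₀(0)−1,0)}(x) − (f₀)'₊(x)·1_{[0,1]}(x) for a trade-off function f₀ with f₀(1)=0. Then the trade-off function of the pair (P,R) equals f₀: T(P,R)(α) = f₀(α) for all α∈[0,1]. -/
open Set MeasureTheory

open Filter Topology

/-!
On `[0, 1]` the measure `R` has density `-(f₀)'₊` with respect to `P`, a non-increasing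
likelihood ratio since `f₀` is convex. Hence the Neyman–Pearson argument applies: for a test `φ`
of level `α` and `c = -(f₀)'₊(α)`, the function `(1 - φ - 1_{(α,1]}) (-(f₀)'₊ - c)` is pointwise
nonnegative, so the type II error of `φ` is at least that of the lower-tail test `1_{(-∞,α]}`,
which is `∫_α^1 -(f₀)'₊ = f₀ α - f₀ 1 = f₀ α`. The mass of `R` on the negative reals only adds to
type II errors. At `α = 0` the right derivative may blow up, and one passes to the limit using
continuity of `f₀` at `0`.
-/

theorem setIntegral_Ioi_le_integral_mul {μ : Measure ℝ} [IsFiniteMeasure μ] {G ψ : ℝ → ℝ}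
    {α c : ℝ} (hG : Integrable G μ) (hψ : AEStronglyMeasurable ψ μ)
    (hψ01 : ∀ᵐ x ∂μ, ψ x ∈ Icc (0 : ℝ) 1) (hc : 0 ≤ c)
    (hGc : ∀ᵐ x ∂μ, (x ≤ α → c ≤ G x) ∧ (α < x → G x ≤ c))
    (hmass : μ.real (Ioi α) ≤ ∫ x, ψ x ∂μ) :
    ∫ x in Ioi α, G x ∂μ ≤ ∫ x, ψ x * G x ∂μ := by
  have hψint : Integrable ψ μ := Integrable.of_bound hψ 1 <| hψ01.mono fun x hx ↦ by
    rw [Real.norm_of_nonneg hx.1]; exact hx.2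
  have hψG : Integrable (fun x ↦ ψ x * G x) μ := hG.bdd_mul hψ <| hψ01.mono fun x hx ↦ by
    rw [Real.norm_of_nonneg hx.1]; exact hx.2
  have hχ : Integrable ((Ioi α).indicator (1 : ℝ → ℝ)) μ :=
    (integrable_const 1).indicator measurableSet_Ioi
  have hdiff : Integrable (fun x ↦ c * (ψ x - (Ioi α).indicator 1 x)) μ :=
    (hψint.sub hχ).const_mul c
  -- Neyman–Pearson: `(ψ - 1_{(α,∞)}) (G - c) ≥ 0` pointwise.
  have hpt : ∀ᵐ x ∂μ, (Ioi α).indicator G x ≤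
      ψ x * G x - c * (ψ x - (Ioi α).indicator 1 x) := by
    filter_upwards [hψ01, hGc] with x hx ⟨hleft, hright⟩
    by_cases hxα : α < x
    · simp only [indicator_of_mem (mem_Ioi.2 hxα), Pi.one_apply]
      nlinarith [hright hxα, hx.2]
    · simp only [indicator_of_notMem (notMem_Ioi.2 (not_lt.1 hxα))]
      nlinarith [hleft (not_lt.1 hxα), hx.1]
  calc ∫ x in Ioi α, G x ∂μ = ∫ x, (Ioi α).indicator G x ∂μ :=
        (integral_indicator measurableSet_Ioi).symm
    _ ≤ ∫ x, (ψ x * G x - c * (ψ x - (Ioi α).indicator 1 x)) ∂μ :=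
        integral_mono_ae (hG.indicator measurableSet_Ioi) (hψG.sub hdiff) hpt
    _ = ∫ x, ψ x * G x ∂μ - c * (∫ x, ψ x ∂μ - μ.real (Ioi α)) := by
        rw [integral_sub hψG hdiff, integral_const_mul, integral_sub hψint hχ,
          integral_indicator_one measurableSet_Ioi]
    _ ≤ ∫ x, ψ x * G x ∂μ := by nlinarith

namespace ConvexOn

variable {f : ℝ → ℝ} {a b : ℝ}

lemma rightDeriv_nonpos (hfc : ConvexOn ℝ (Icc a b) f) (hf : AntitoneOn f (Icc a b))
    {x : ℝ} (hx : x ∈ Ioo a b) : derivWithin f (Ioi x) x ≤ 0 := by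
  have hxb : x ∈ Icc a b := Ioo_subset_Icc_self hx
  have hb : b ∈ Icc a b := right_mem_Icc.2 (hx.1.trans hx.2).le
  calc derivWithin f (Ioi x) x ≤ slope f x b :=
        hfc.rightDeriv_le_slope_of_mem_interior (by rwa [interior_Icc]) hb hx.2
    _ ≤ 0 := by
        rw [slope_def_field]
        exact div_nonpos_of_nonpos_of_nonneg (sub_nonpos.2 (hf hxb hb hx.2.le))
          (sub_nonneg.2 hx.2.le)

lemma hasDerivWithinAt_rightDeriv (hfc : ConvexOn ℝ (Icc a b) f) {x : ℝ} (hx : x ∈ Ioo a b) :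
    HasDerivWithinAt f (derivWithin f (Ioi x) x) (Ioi x) x :=
  hfc.hasDerivWithinAt_rightDeriv_of_mem_interior (by rwa [interior_Icc])

lemma integrableOn_rightDeriv (hfc : ConvexOn ℝ (Icc a b) f) (hcont : ContinuousOn f (Icc a b))
    (hf : AntitoneOn f (Icc a b)) : IntegrableOn (fun x ↦ derivWithin f (Ioi x) x) (Ioc a b) := by
  have h := intervalIntegral.integrableOn_deriv_right_of_nonneg hcont.neg
    (fun x hx ↦ (hfc.hasDerivWithinAt_rightDeriv hx).neg)
    (fun x hx ↦ neg_nonneg.2 (hfc.rightDeriv_nonpos hf hx))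
  simpa using h.neg

lemma integral_rightDeriv (hab : a ≤ b) (hfc : ConvexOn ℝ (Icc a b) f)
    (hcont : ContinuousOn f (Icc a b)) (hf : AntitoneOn f (Icc a b)) :
    ∫ x in a..b, derivWithin f (Ioi x) x = f b - f a :=
  intervalIntegral.integral_eq_sub_of_hasDeriv_right_of_le hab hcont
    (fun _ hx ↦ hfc.hasDerivWithinAt_rightDeriv hx)
    ((intervalIntegrable_iff_integrableOn_Ioc_of_le hab).2 (hfc.integrableOn_rightDeriv hcont hf))

lemma setIntegral_Ioi_neg_rightDeriv (hfc : ConvexOn ℝ (Icc a b) f)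
    (hcont : ContinuousOn f (Icc a b)) (hf : AntitoneOn f (Icc a b)) {α : ℝ}
    (hα : α ∈ Icc a b) :
    ∫ x in Ioi α, -derivWithin f (Ioi x) x ∂volume.restrict (Ioo a b) = f α - f b := by
  have hsub : Icc α b ⊆ Icc a b := Icc_subset_Icc_left hα.1
  rw [Measure.restrict_restrict measurableSet_Ioi, Ioi_inter_Ioo, max_eq_left hα.1,
    ← integral_Ioc_eq_integral_Ioo, ← intervalIntegral.integral_of_le hα.2,
    intervalIntegral.integral_neg, (hfc.subset hsub (convex_Icc α b)).integral_rightDeriv hα.2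
      (hcont.mono hsub) (hf.mono hsub), neg_sub]

variable {ψ : ℝ → ℝ} {α : ℝ}

lemma sub_le_setIntegral_mul_neg_rightDeriv_of_mem_Ioo (hfc : ConvexOn ℝ (Icc a b) f)
    (hcont : ContinuousOn f (Icc a b)) (hf : AntitoneOn f (Icc a b)) (hα : α ∈ Ioo a b)
    (hψ : AEStronglyMeasurable ψ (volume.restrict (Ioo a b))) (hψ01 : ∀ x, ψ x ∈ Icc (0 : ℝ) 1)
    (hmass : b - α ≤ ∫ x in Ioo a b, ψ x) :
    f α - f b ≤ ∫ x in Ioo a b, ψ x * -derivWithin f (Ioi x) x := by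
  have hmono := hfc.monotoneOn_rightDeriv
  rw [interior_Icc] at hmono
  rw [← hfc.setIntegral_Ioi_neg_rightDeriv hcont hf (Ioo_subset_Icc_self hα)]
  refine setIntegral_Ioi_le_integral_mul
    ((hfc.integrableOn_rightDeriv hcont hf).mono_set Ioo_subset_Ioc_self).neg hψ
    (ae_of_all _ hψ01) (neg_nonneg.2 (hfc.rightDeriv_nonpos hf hα)) ?_ ?_
  · filter_upwards [ae_restrict_mem measurableSet_Ioo] with x hx
    exact ⟨fun hxα ↦ neg_le_neg (hmono hx hα hxα), fun hαx ↦ neg_le_neg (hmono hα hx hαx.le)⟩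
  · rwa [measureReal_restrict_apply measurableSet_Ioi, Ioi_inter_Ioo, max_eq_left hα.1.le,
      Real.volume_real_Ioo_of_le hα.2.le]

lemma sub_le_setIntegral_mul_neg_rightDeriv (hfc : ConvexOn ℝ (Icc a b) f)
    (hcont : ContinuousOn f (Icc a b)) (hf : AntitoneOn f (Icc a b)) (hα : α ∈ Icc a b)
    (hψ : AEStronglyMeasurable ψ (volume.restrict (Ioo a b))) (hψ01 : ∀ x, ψ x ∈ Icc (0 : ℝ) 1)
    (hmass : b - α ≤ ∫ x in Ioo a b, ψ x) :
    f α - f b ≤ ∫ x in Ioo a b, ψ x * -derivWithin f (Ioi x) x := by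
  rcases hα.2.eq_or_lt with rfl | hαb
  · rw [sub_self]
    exact setIntegral_nonneg measurableSet_Ioo fun x hx ↦
      mul_nonneg (hψ01 x).1 (neg_nonneg.2 (hfc.rightDeriv_nonpos hf hx))
  rcases hα.1.eq_or_lt with rfl | haα
  · have hlim : Tendsto (fun x ↦ f x - f b) (𝓝[>] a) (𝓝 (f a - f b)) :=
      (((hcont a hα).mono_of_mem_nhdsWithin (Icc_mem_nhdsGT hαb)).sub
        continuousWithinAt_const).tendsto
    refine le_of_tendsto hlim ?_
    filter_upwards [Ioo_mem_nhdsGT hαb] with x hx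
    exact hfc.sub_le_setIntegral_mul_neg_rightDeriv_of_mem_Ioo hcont hf hx hψ hψ01
      (by linarith [hx.1])
  · exact hfc.sub_le_setIntegral_mul_neg_rightDeriv_of_mem_Ioo hcont hf ⟨haα, hαb⟩ hψ hψ01 hmass

end ConvexOn

lemma Set.indicator_one_mem_Icc (s : Set ℝ) (x : ℝ) : s.indicator (1 : ℝ → ℝ) x ∈ Icc (0 : ℝ) 1 := by
  by_cases hx : x ∈ s <;> simp [hx]

lemma ofReal_rdens (f₀ : ℝ → ℝ) :
    (fun x ↦ ENNReal.ofReal (rdens f₀ x)) = (Ico (f₀ 0 - 1) 0).indicator 1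
      + (Icc 0 1).indicator (fun x ↦ ENNReal.ofReal (-derivWithin f₀ (Ioi x) x)) := by
  ext x
  by_cases hx : x ∈ Ico (f₀ 0 - 1) 0
  · have hx' : x ∉ Icc (0 : ℝ) 1 := fun h ↦ (not_lt.2 h.1) hx.2
    simp [rdens, hx, hx']
  · by_cases hx' : x ∈ Icc (0 : ℝ) 1 <;> simp [rdens, hx, hx', derivWithin_Ioi_eq_Ici]

lemma withDensity_rdens (f₀ : ℝ → ℝ) :
    volume.withDensity (fun x ↦ ENNReal.ofReal (rdens f₀ x)) =
      volume.restrict (Ico (f₀ 0 - 1) 0) + (volume.restrict (Ioo 0 1)).withDensity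
        (fun x ↦ ENNReal.ofReal (-derivWithin f₀ (Ioi x) x)) := by
  rw [ofReal_rdens, withDensity_add_left (measurable_one.indicator measurableSet_Ico),
    withDensity_indicator measurableSet_Ico, withDensity_indicator measurableSet_Icc,
    withDensity_one, Measure.restrict_congr_set Ioo_ae_eq_Icc]

section rdens

variable {f₀ : ℝ → ℝ}

lemma integral_withDensity_rdens (hconv : ConvexOn ℝ (Icc (0 : ℝ) 1) f₀)
    (hcont : ContinuousOn f₀ (Icc (0 : ℝ) 1)) (hanti : AntitoneOn f₀ (Icc (0 : ℝ) 1))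
    {h : ℝ → ℝ} (hh : Measurable h) (h01 : ∀ x, h x ∈ Icc (0 : ℝ) 1) :
    ∫ x, h x ∂volume.withDensity (fun x ↦ ENNReal.ofReal (rdens f₀ x)) =
      (∫ x in Ico (f₀ 0 - 1) 0, h x) + ∫ x in Ioo 0 1, h x * -derivWithin f₀ (Ioi x) x := by
  have hG : IntegrableOn (fun x ↦ -derivWithin f₀ (Ioi x) x) (Ioo 0 1) :=
    ((hconv.integrableOn_rightDeriv hcont hanti).mono_set Ioo_subset_Ioc_self).neg
  have := isFiniteMeasure_withDensity_ofReal hG.hasFiniteIntegral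
  have hbound : ∀ ν : Measure ℝ, ∀ᵐ x ∂ν, ‖h x‖ ≤ 1 := fun ν ↦ ae_of_all _ fun x ↦ by
    rw [Real.norm_of_nonneg (h01 x).1]; exact (h01 x).2
  have hGm : Measurable fun x ↦ ENNReal.ofReal (-derivWithin f₀ (Ioi x) x) :=
    (measurable_derivWithin_Ioi f₀).neg.ennreal_ofReal
  rw [withDensity_rdens, integral_add_measure (.of_bound hh.aestronglyMeasurable 1 (hbound _))
    (.of_bound hh.aestronglyMeasurable 1 (hbound _)),
    integral_withDensity_eq_integral_toReal_smul hGm (ae_of_all _ fun _ ↦ ENNReal.ofReal_lt_top)]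
  congr 1
  refine setIntegral_congr_fun measurableSet_Ioo fun x hx ↦ ?_
  rw [ENNReal.toReal_ofReal (neg_nonneg.2 (hconv.rightDeriv_nonpos hanti hx)), smul_eq_mul,
    mul_comm]

lemma integral_one_sub_indicator_Iic_withDensity_rdens (hconv : ConvexOn ℝ (Icc (0 : ℝ) 1) f₀)
    (hcont : ContinuousOn f₀ (Icc (0 : ℝ) 1)) (hanti : AntitoneOn f₀ (Icc (0 : ℝ) 1))
    (h1 : f₀ 1 = 0) {α : ℝ} (hα : α ∈ Icc (0 : ℝ) 1) :
    ∫ x, (1 - (Iic α).indicator 1 x) ∂volume.withDensity (fun y => ENNReal.ofReal (rdens f₀ y))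
      = f₀ α := by
  have hIoi : (fun x ↦ 1 - (Iic α).indicator (1 : ℝ → ℝ) x) = (Ioi α).indicator 1 := by
    ext x; simp [← compl_Iic, indicator_compl]
  rw [hIoi, integral_withDensity_rdens hconv hcont hanti
    (measurable_one.indicator measurableSet_Ioi) (indicator_one_mem_Icc _),
    setIntegral_eq_zero_of_forall_eq_zero fun x hx ↦
      indicator_of_notMem (notMem_Ioi.2 (hx.2.le.trans hα.1)) _, zero_add]
  simp_rw [← indicator_mul_left (g := fun x ↦ -derivWithin f₀ (Ioi x) x), Pi.one_apply, one_mul]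
  rw [integral_indicator measurableSet_Ioi, hconv.setIntegral_Ioi_neg_rightDeriv hcont hanti hα,
    h1, sub_zero]

lemma le_integral_one_sub_withDensity_rdens (hconv : ConvexOn ℝ (Icc (0 : ℝ) 1) f₀)
    (hcont : ContinuousOn f₀ (Icc (0 : ℝ) 1)) (hanti : AntitoneOn f₀ (Icc (0 : ℝ) 1))
    (h1 : f₀ 1 = 0) {α : ℝ} (hα : α ∈ Icc (0 : ℝ) 1) {φ : ℝ → ℝ} (hφ : Measurable φ)
    (hφ01 : ∀ x, φ x ∈ Icc (0 : ℝ) 1) (hsize : ∫ x in Icc (0 : ℝ) 1, φ x ≤ α) :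
    f₀ α ≤ ∫ x, (1 - φ x) ∂volume.withDensity (fun y => ENNReal.ofReal (rdens f₀ y)) := by
  have hψ : Measurable fun x ↦ 1 - φ x := measurable_const.sub hφ
  have hψ01 : ∀ x, 1 - φ x ∈ Icc (0 : ℝ) 1 :=
    fun x ↦ ⟨sub_nonneg.2 (hφ01 x).2, sub_le_self _ (hφ01 x).1⟩
  have hφint : IntegrableOn φ (Ioo 0 1) :=
    Measure.integrableOn_of_bounded (M := 1) measure_Ioo_lt_top.ne hφ.aestronglyMeasurable
      (ae_of_all _ fun x ↦ by rw [Real.norm_of_nonneg (hφ01 x).1]; exact (hφ01 x).2)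
  have hmass : 1 - α ≤ ∫ x in Ioo 0 1, (1 - φ x) := by
    rw [integral_sub (integrable_const 1) hφint, setIntegral_const,
      Real.volume_real_Ioo_of_le zero_le_one, smul_eq_mul, sub_zero, one_mul,
      Measure.restrict_congr_set Ioo_ae_eq_Icc]
    linarith
  have hNP := hconv.sub_le_setIntegral_mul_neg_rightDeriv hcont hanti hα
    hψ.aestronglyMeasurable hψ01 hmass
  have hneg : 0 ≤ ∫ x in Ico (f₀ 0 - 1) 0, (1 - φ x) :=
    setIntegral_nonneg measurableSet_Ico fun x _ ↦ (hψ01 x).1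
  rw [integral_withDensity_rdens hconv hcont hanti hψ hψ01]
  rw [h1, sub_zero] at hNP
  linarith

end rdens

theorem stmt17_general (f₀ : ℝ → ℝ)
    (hconv : ConvexOn ℝ (Icc (0:ℝ) 1) f₀) (hcont : ContinuousOn f₀ (Icc (0:ℝ) 1))
    (hanti : AntitoneOn f₀ (Icc (0:ℝ) 1)) (h1 : f₀ 1 = 0) :
    ∀ α ∈ Icc (0:ℝ) 1,
      tradeoff (volume.restrict (Icc (0:ℝ) 1))
        (volume.withDensity (fun y => ENNReal.ofReal (rdens f₀ y))) α = f₀ α := by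
  intro α hα
  have hsize : ∫ x in Icc (0 : ℝ) 1, (Iic α).indicator 1 x = α := by
    rw [integral_indicator_one measurableSet_Iic, measureReal_restrict_apply measurableSet_Iic,
      show Iic α ∩ Icc 0 1 = Icc 0 α from ext fun x ↦ ⟨fun h ↦ ⟨h.2.1, h.1⟩,
        fun h ↦ ⟨h.2, h.1, h.2.trans hα.2⟩⟩, Real.volume_real_Icc_of_le hα.1, sub_zero]
  refine IsLeast.csInf_eq ⟨⟨(Iic α).indicator 1, measurable_one.indicator measurableSet_Iic,
    indicator_one_mem_Icc _, hsize.le,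
    (integral_one_sub_indicator_Iic_withDensity_rdens hconv hcont hanti h1 hα).symm⟩, ?_⟩
  rintro _ ⟨φ, hφ, hφ01, hsize, rfl⟩
  exact le_integral_one_sub_withDensity_rdens hconv hcont hanti h1 hα hφ hφ01 hsize

/-- with `P` uniform on `[0,1]` and `R` the measure with density `r`,
the trade-off function of `(P,R)` equals `f₀` on `[0,1]`. -/
theorem stmt17 (f₀ : ℝ → ℝ)
    (hconv : ConvexOn ℝ (Icc (0:ℝ) 1) f₀) (hcont : ContinuousOn f₀ (Icc (0:ℝ) 1))
    (hanti : AntitoneOn f₀ (Icc (0:ℝ) 1)) (h1 : f₀ 1 = 0)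
    (hrange : ∀ t ∈ Icc (0:ℝ) 1, f₀ t ∈ Icc (0:ℝ) 1) :
    ∀ α ∈ Icc (0:ℝ) 1,
      tradeoff (volume.restrict (Icc (0:ℝ) 1))
        (volume.withDensity (fun y => ENNReal.ofReal (rdens f₀ y))) α = f₀ α :=
  stmt17_general f₀ hconv hcont hanti h1
end
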